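/- arXiv:2207.08116 — 3 statements merged into one kernel-verified Lean document; each statement's English description precedes it below -/
import Mathlib

section
/- Let n and m be positive integers such that neither one of n, m divides the other. Then for every integer s with 1 ≤ s ≤ gcd(n, m), there exists an extremal n × m doubly stochastic array A whose support is of size n + m − s. -/
/-- An `n × m` real matrix is a *doubly stochastic array* if its entries are
nonnegative, each column sums to `n` and each row sums to `m`. -/
def IsDSA (n m : ℕ) (A : Matrix (Fin n) (Fin m) ℝ) : Prop :=
  (∀ i j, 0 ≤ A i j) ∧ (∀ j, ∑ i, A i j = (n : ℝ)) ∧ (∀ i, ∑ j, A i j = (m : ℝ))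

/-- An array `A ∈ S(n,m)` is *extremal* if it cannot be written as a convex
combination of two doubly stochastic arrays both different from `A`. -/
def IsExtremal (n m : ℕ) (A : Matrix (Fin n) (Fin m) ℝ) : Prop :=
  IsDSA n m A ∧ ∀ (B C : Matrix (Fin n) (Fin m) ℝ) (t : ℝ),
    IsDSA n m B → IsDSA n m C → 0 < t → t < 1 →
    A = t • B + (1 - t) • C → B = A ∨ C = A

/-- The support of a matrix: the set of positions of its nonzero entries. -/
def matSupp (n m : ℕ) (A : Matrix (Fin n) (Fin m) ℝ) : Set (Fin n × Fin m) :=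
  {p | A p.1 p.2 ≠ 0}

/-- The size of the support of a matrix. -/
noncomputable def suppCard (n m : ℕ) (A : Matrix (Fin n) (Fin m) ℝ) : ℕ :=
  (matSupp n m A).ncard

/-- A subset `Ω` of positions contains a *cycle* if there are `s ≥ 2`, distinct row
indices `i₁,…,i_s` and distinct column indices `j₁,…,j_s` such that all the pairs
`(i₁,j₁), (i₂,j₁), (i₂,j₂), (i₃,j₂), …, (i_s,j_s), (i₁,j_s)` belong to `Ω`. -/
def ContainsCycle (n m : ℕ) (Ω : Set (Fin n × Fin m)) : Prop :=
  ∃ s : ℕ, 2 ≤ s ∧ ∃ (i : ZMod s → Fin n) (j : ZMod s → Fin m),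
    Function.Injective i ∧ Function.Injective j ∧
    ∀ t : ZMod s, (i t, j t) ∈ Ω ∧ (i (t + 1), j t) ∈ Ω

/-- Two matrices are *equivalent* if one is obtained from the other by a
permutation of rows and a permutation of columns. -/
def MatEquiv (n m : ℕ) (A B : Matrix (Fin n) (Fin m) ℝ) : Prop :=
  ∃ (σ : Equiv.Perm (Fin n)) (τ : Equiv.Perm (Fin m)), ∀ i j, B i j = A (σ i) (τ j)

namespace DSA5

open Finset




/-! ### Generic staircase matrices over ℕ -/

def stair (R C : ℕ → ℕ) (i j : ℕ) : ℕ :=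
  ((Finset.Ico (R i) (R (i+1))) ∩ (Finset.Ico (C j) (C (j+1)))).card

lemma stair_eq (R C : ℕ → ℕ) (i j : ℕ) :
    stair R C i j = min (R (i+1)) (C (j+1)) - max (R i) (C j) := by
  unfold stair
  rw [Finset.Ico_inter_Ico, Nat.card_Ico]

lemma stair_ne_iff (R C : ℕ → ℕ) (i j : ℕ) :
    stair R C i j ≠ 0 ↔ max (R i) (C j) < min (R (i+1)) (C (j+1)) := by
  rw [stair_eq]; omega

lemma stair_comm (R C : ℕ → ℕ) (i j : ℕ) : stair R C i j = stair C R j i := by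
  unfold stair; rw [Finset.inter_comm]

lemma exists_interval (C : ℕ → ℕ) (hC0 : C 0 = 0) :
    ∀ b x, x < C b → ∃ j, j < b ∧ C j ≤ x ∧ x < C (j+1) := by
  intro b
  induction b with
  | zero => intro x hx; omega
  | succ b ih =>
    intro x hx
    by_cases h : C b ≤ x
    · exact ⟨b, Nat.lt_succ_self b, h, hx⟩
    · obtain ⟨j, h1, h2, h3⟩ := ih x (by omega)
      exact ⟨j, by omega, h2, h3⟩

lemma sum_inter_card (C : ℕ → ℕ) (hC0 : C 0 = 0) (hm : Monotone C) (b x y : ℕ)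
    (hy : y ≤ C b) :
    ∑ j ∈ Finset.range b, ((Finset.Ico x y) ∩ (Finset.Ico (C j) (C (j+1)))).card = y - x := by
  have hcover : Finset.Ico x y = (Finset.range b).biUnion
      (fun j => (Finset.Ico x y) ∩ (Finset.Ico (C j) (C (j+1)))) := by
    ext z
    simp only [Finset.mem_biUnion, Finset.mem_inter, Finset.mem_Ico, Finset.mem_range]
    constructor
    · intro hz
      obtain ⟨j, hj, h1, h2⟩ := exists_interval C hC0 b z (lt_of_lt_of_le hz.2 hy)
      exact ⟨j, hj, hz, h1, h2⟩
    · rintro ⟨j, _, hz, _⟩; exact hz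
  have hdisj : ∀ j1 ∈ Finset.range b, ∀ j2 ∈ Finset.range b, j1 ≠ j2 →
      Disjoint ((Finset.Ico x y) ∩ (Finset.Ico (C j1) (C (j1+1))))
               ((Finset.Ico x y) ∩ (Finset.Ico (C j2) (C (j2+1)))) := by
    intro j1 _ j2 _ hne
    rw [Finset.disjoint_left]
    intro z h1 h2
    simp only [Finset.mem_inter, Finset.mem_Ico] at h1 h2
    rcases Nat.lt_or_ge j1 j2 with h | h
    · have : C (j1+1) ≤ C j2 := hm (by omega); omega
    · have hlt : j2 < j1 := by omega
      have : C (j2+1) ≤ C j1 := hm (by omega); omega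
  have h2 := (Finset.card_biUnion hdisj).symm
  rw [← hcover] at h2
  rw [Nat.card_Ico] at h2
  exact h2

/-- A bundled staircase datum. -/
structure StairData where
  R : ℕ → ℕ
  C : ℕ → ℕ
  a : ℕ
  b : ℕ
  ha : 0 < a
  hb : 0 < b
  hR0 : R 0 = 0
  hC0 : C 0 = 0
  hRlt : ∀ i < a, R i < R (i+1)
  hClt : ∀ j < b, C j < C (j+1)
  hRstab : ∀ i, a ≤ i → R i = R a
  hCstab : ∀ j, b ≤ j → C j = C b
  hT : R a = C b
  hdisj : ∀ i j, 0 < i → i < a → 0 < j → j < b → R i ≠ C j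

namespace StairData

variable (D : StairData)

def N : ℕ → ℕ → ℕ := stair D.R D.C

lemma monoR : Monotone D.R := by
  apply monotone_nat_of_le_succ
  intro i
  rcases Nat.lt_or_ge i D.a with h | h
  · exact (D.hRlt i h).le
  · rw [D.hRstab i h, D.hRstab (i+1) (by omega)]

lemma monoC : Monotone D.C := by
  apply monotone_nat_of_le_succ
  intro j
  rcases Nat.lt_or_ge j D.b with h | h
  · exact (D.hClt j h).le
  · rw [D.hCstab j h, D.hCstab (j+1) (by omega)]

lemma Rlt_of_lt {i i' : ℕ} (h : i < i') (h2 : i < D.a) : D.R i < D.R i' :=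
  lt_of_lt_of_le (D.hRlt i h2) (D.monoR h)

lemma Clt_of_lt {j j' : ℕ} (h : j < j') (h2 : j < D.b) : D.C j < D.C j' :=
  lt_of_lt_of_le (D.hClt j h2) (D.monoC h)

lemma Rle_T (i : ℕ) : D.R i ≤ D.R D.a := by
  rcases Nat.lt_or_ge i D.a with h | h
  · exact D.monoR h.le
  · rw [D.hRstab i h]

lemma Cle_T (j : ℕ) : D.C j ≤ D.C D.b := by
  rcases Nat.lt_or_ge j D.b with h | h
  · exact D.monoC h.le
  · rw [D.hCstab j h]

/-- transpose -/
def tr : StairData where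
  R := D.C
  C := D.R
  a := D.b
  b := D.a
  ha := D.hb
  hb := D.ha
  hR0 := D.hC0
  hC0 := D.hR0
  hRlt := D.hClt
  hClt := D.hRlt
  hRstab := D.hCstab
  hCstab := D.hRstab
  hT := D.hT.symm
  hdisj := fun i j h1 h2 h3 h4 => (D.hdisj j i h3 h4 h1 h2).symm

lemma tr_N (i j : ℕ) : D.tr.N j i = D.N i j := (stair_comm D.R D.C i j).symm

lemma row_zero {i : ℕ} (hi : D.a ≤ i) (j : ℕ) : D.N i j = 0 := by
  have h1 : D.R i = D.R D.a := D.hRstab i hi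
  have h2 : D.R (i+1) = D.R D.a := D.hRstab (i+1) (by omega)
  rw [N, stair_eq, h1, h2]
  have := D.Cle_T j
  have := D.hT
  omega

lemma col_zero {j : ℕ} (hj : D.b ≤ j) (i : ℕ) : D.N i j = 0 := by
  rw [← D.tr_N]; exact D.tr.row_zero hj i

lemma row_sum {i : ℕ} (hi : i < D.a) {b' : ℕ} (hb' : D.b ≤ b') :
    ∑ j ∈ Finset.range b', D.N i j = D.R (i+1) - D.R i := by
  have hpad : ∑ j ∈ Finset.range b', D.N i j = ∑ j ∈ Finset.range D.b, D.N i j := by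
    symm
    apply Finset.sum_subset (by intro x hx; simp only [Finset.mem_range] at *; omega)
    intro x _ hx
    simp only [Finset.mem_range] at hx
    exact D.col_zero (by omega) i
  rw [hpad]
  exact sum_inter_card D.C D.hC0 D.monoC D.b (D.R i) (D.R (i+1))
    (by rw [← D.hT]; exact D.Rle_T (i+1))

lemma col_sum {j : ℕ} (hj : j < D.b) {a' : ℕ} (ha' : D.a ≤ a') :
    ∑ i ∈ Finset.range a', D.N i j = D.C (j+1) - D.C j := by
  have : ∀ i, D.N i j = D.tr.N j i := fun i => (D.tr_N i j).symm
  simp only [this]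
  exact D.tr.row_sum hj ha'

lemma supp_lt {i j : ℕ} (h : D.N i j ≠ 0) : i < D.a ∧ j < D.b := by
  constructor
  · by_contra hc; exact h (D.row_zero (by omega) j)
  · by_contra hc; exact h (D.col_zero (by omega) i)

/-- forward peeling: no later cell in the row, or no later cell in the column -/
lemma peel_fwd {i j : ℕ} (h : D.N i j ≠ 0) :
    (∀ j', D.N i j' ≠ 0 → j' ≤ j) ∨ (∀ i', D.N i' j ≠ 0 → i' ≤ i) := by
  by_contra hc
  push_neg at hc
  obtain ⟨⟨j', hj1, hj2⟩, ⟨i', hi1, hi2⟩⟩ := hc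
  rw [N, stair_ne_iff] at hj1 hi1 h
  have h1 : D.C (j+1) ≤ D.C j' := D.monoC (by omega)
  have h2 : D.R (i+1) ≤ D.R i' := D.monoR (by omega)
  omega

lemma peel_bwd {i j : ℕ} (h : D.N i j ≠ 0) :
    (∀ j', D.N i j' ≠ 0 → j ≤ j') ∨ (∀ i', D.N i' j ≠ 0 → i ≤ i') := by
  by_contra hc
  push_neg at hc
  obtain ⟨⟨j', hj1, hj2⟩, ⟨i', hi1, hi2⟩⟩ := hc
  rw [N, stair_ne_iff] at hj1 hi1 h
  have h1 : D.C (j'+1) ≤ D.C j := D.monoC (by omega)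
  have h2 : D.R (i'+1) ≤ D.R i := D.monoR (by omega)
  omega

def suppF : Finset (ℕ × ℕ) :=
  ((Finset.range D.a) ×ˢ (Finset.range D.b)).filter (fun e => D.N e.1 e.2 ≠ 0)

lemma mem_suppF {e : ℕ × ℕ} : e ∈ D.suppF ↔ D.N e.1 e.2 ≠ 0 := by
  unfold suppF
  simp only [Finset.mem_filter, Finset.mem_product, Finset.mem_range]
  constructor
  · tauto
  · intro h; exact ⟨⟨(D.supp_lt h).1, (D.supp_lt h).2⟩, h⟩

lemma suppF_card : D.suppF.card = D.a + D.b - 1 := by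
  classical
  set M : Finset ℕ :=
    insert 0 (((Finset.Ioo 0 D.a).image D.R) ∪ ((Finset.Ioo 0 D.b).image D.C)) with hM
  have hMcard : M.card = D.a + D.b - 1 := by
    have h0 : (0:ℕ) ∉ ((Finset.Ioo 0 D.a).image D.R) ∪ ((Finset.Ioo 0 D.b).image D.C) := by
      simp only [Finset.mem_union, Finset.mem_image, Finset.mem_Ioo]
      rintro (⟨i, ⟨hi1, hi2⟩, hi3⟩ | ⟨j, ⟨hj1, hj2⟩, hj3⟩)
      · have := D.Rlt_of_lt hi1 (by omega)
        rw [D.hR0] at this; omega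
      · have := D.Clt_of_lt hj1 (by omega)
        rw [D.hC0] at this; omega
    have hdisj2 : Disjoint ((Finset.Ioo 0 D.a).image D.R) ((Finset.Ioo 0 D.b).image D.C) := by
      rw [Finset.disjoint_left]
      simp only [Finset.mem_image, Finset.mem_Ioo]
      rintro x ⟨i, ⟨hi1, hi2⟩, rfl⟩ ⟨j, ⟨hj1, hj2⟩, hj⟩
      exact D.hdisj i j hi1 hi2 hj1 hj2 hj.symm
    have hinjR : Set.InjOn D.R (Finset.Ioo 0 D.a) := by
      intro x hx y hy hxy
      simp only [Finset.coe_Ioo, Set.mem_Ioo] at hx hy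
      by_contra hne
      rcases Nat.lt_or_ge x y with h | h
      · have := D.Rlt_of_lt h (by omega); omega
      · have := D.Rlt_of_lt (by omega : y < x) (by omega); omega
    have hinjC : Set.InjOn D.C (Finset.Ioo 0 D.b) := by
      intro x hx y hy hxy
      simp only [Finset.coe_Ioo, Set.mem_Ioo] at hx hy
      by_contra hne
      rcases Nat.lt_or_ge x y with h | h
      · have := D.Clt_of_lt h (by omega); omega
      · have := D.Clt_of_lt (by omega : y < x) (by omega); omega
    rw [hM, Finset.card_insert_of_notMem h0, Finset.card_union_of_disjoint hdisj2,
        Finset.card_image_of_injOn hinjR, Finset.card_image_of_injOn hinjC,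
        Nat.card_Ioo, Nat.card_Ioo]
    have := D.ha; have := D.hb
    omega
  rw [← hMcard]
  apply Finset.card_bij (fun e _ => max (D.R e.1) (D.C e.2))
  · -- maps to M
    intro e he
    rw [D.mem_suppF] at he
    have hlt := D.supp_lt he
    rcases Nat.lt_or_ge (D.R e.1) (D.C e.2) with h | h
    · have he2 : 0 < e.2 := by
        by_contra hc
        have h0 : e.2 = 0 := by omega
        rw [h0, D.hC0] at h; omega
      rw [hM]
      apply Finset.mem_insert_of_mem
      apply Finset.mem_union_right
      simp only [Finset.mem_image, Finset.mem_Ioo]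
      exact ⟨e.2, ⟨he2, hlt.2⟩, by omega⟩
    · rcases Nat.eq_zero_or_pos e.1 with h1 | h1
      · have hz : D.R e.1 = 0 := by rw [h1, D.hR0]
        have hz2 : D.C e.2 ≤ 0 := by omega
        have : max (D.R e.1) (D.C e.2) = 0 := by omega
        rw [this, hM]
        exact Finset.mem_insert_self _ _
      · rw [hM]
        apply Finset.mem_insert_of_mem
        apply Finset.mem_union_left
        simp only [Finset.mem_image, Finset.mem_Ioo]
        exact ⟨e.1, ⟨h1, hlt.1⟩, by omega⟩
  · -- injective
    intro e1 he1 e2 he2 heq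
    rw [D.mem_suppF, N, stair_ne_iff] at he1 he2
    by_contra hne
    have hne' : e1.1 ≠ e2.1 ∨ e1.2 ≠ e2.2 := by
      by_contra hc
      push_neg at hc
      exact hne (Prod.ext hc.1 hc.2)
    rcases Nat.lt_trichotomy e1.1 e2.1 with h | h | h
    · have : D.R (e1.1+1) ≤ D.R e2.1 := D.monoR (by omega)
      omega
    · rcases hne' with h2 | h2
      · omega
      rcases Nat.lt_or_ge e1.2 e2.2 with h3 | h3
      · have : D.C (e1.2+1) ≤ D.C e2.2 := D.monoC (by omega)
        omega
      · have h4 : e2.2 < e1.2 := by omega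
        have : D.C (e2.2+1) ≤ D.C e1.2 := D.monoC (by omega)
        omega
    · have : D.R (e2.1+1) ≤ D.R e1.1 := D.monoR (by omega)
      omega
  · -- surjective
    intro x hx
    rw [hM] at hx
    rcases Finset.mem_insert.1 hx with rfl | hx'
    · refine ⟨(0,0), ?_, ?_⟩
      · rw [D.mem_suppF]
        rw [N, stair_ne_iff]
        have h1 := D.hRlt 0 D.ha
        have h2 := D.hClt 0 D.hb
        show max (D.R 0) (D.C 0) < min (D.R (0+1)) (D.C (0+1))
        rw [D.hR0] at h1 ⊢
        rw [D.hC0] at h2 ⊢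
        omega
      · simp [D.hR0, D.hC0]
    · rcases Finset.mem_union.1 hx' with hx2 | hx2
      · simp only [Finset.mem_image, Finset.mem_Ioo] at hx2
        obtain ⟨i, ⟨hi1, hi2⟩, rfl⟩ := hx2
        have hlt : D.R i < D.C D.b := by
          rw [← D.hT]; exact D.Rlt_of_lt hi2 hi2
        obtain ⟨j, hj1, hj2, hj3⟩ := exists_interval D.C D.hC0 D.b (D.R i) hlt
        refine ⟨(i, j), ?_, by simp; omega⟩
        rw [D.mem_suppF, N, stair_ne_iff]
        have := D.hRlt i hi2
        simp only
        omega
      · simp only [Finset.mem_image, Finset.mem_Ioo] at hx2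
        obtain ⟨j, ⟨hj1, hj2⟩, rfl⟩ := hx2
        have hlt : D.C j < D.R D.a := by
          rw [D.hT]; exact D.Clt_of_lt hj2 hj2
        obtain ⟨i, hi1, hi2, hi3⟩ := exists_interval D.R D.hR0 D.a (D.C j) hlt
        refine ⟨(i, j), ?_, by simp; omega⟩
        rw [D.mem_suppF, N, stair_ne_iff]
        have := D.hClt j hj2
        simp only
        omega

end StairData




lemma sum_ite_zero {k : ℕ} (f : Fin k → ℝ) (t : Fin k) :
    ∑ y, (if y = t then 0 else f y) = (∑ y, f y) - f t := by
  rw [← Finset.add_sum_erase Finset.univ (fun y => if y = t then 0 else f y) (mem_univ t),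
      ← Finset.add_sum_erase Finset.univ f (mem_univ t)]
  have h1 : ∑ y ∈ Finset.univ.erase t, (if y = t then 0 else f y)
      = ∑ y ∈ Finset.univ.erase t, f y :=
    Finset.sum_congr rfl (fun y hy => if_neg (Finset.ne_of_mem_erase hy))
  rw [h1, if_pos rfl]
  ring

lemma uniq {n m : ℕ} (rk : Fin n × Fin m → ℕ) :
    ∀ (Ω : Finset (Fin n × Fin m)),
    (∀ e ∈ Ω, (∀ f ∈ Ω, f.1 = e.1 → f ≠ e → rk f < rk e) ∨
              (∀ f ∈ Ω, f.2 = e.2 → f ≠ e → rk f < rk e)) →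
    ∀ B C : Matrix (Fin n) (Fin m) ℝ,
    (∀ x y, B x y ≠ 0 → (x, y) ∈ Ω) → (∀ x y, C x y ≠ 0 → (x, y) ∈ Ω) →
    (∀ x, ∑ y, B x y = ∑ y, C x y) → (∀ y, ∑ x, B x y = ∑ x, C x y) →
    B = C := by
  intro Ω
  induction Ω using Finset.strongInduction with
  | _ Ω ih =>
    intro hpeel B C hB hC hrow hcol
    rcases Ω.eq_empty_or_nonempty with rfl | hne
    · funext x y
      have h1 : B x y = 0 := by
        by_contra h; exact absurd (hB x y h) (Finset.notMem_empty _)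
      have h2 : C x y = 0 := by
        by_contra h; exact absurd (hC x y h) (Finset.notMem_empty _)
      rw [h1, h2]
    · obtain ⟨e, heΩ, hmin⟩ := Finset.exists_min_image Ω rk hne
      -- the entry at e is determined
      have key : B e.1 e.2 = C e.1 e.2 := by
        rcases hpeel e heΩ with hrowclean | hcolclean
        · -- e is the only cell of Ω in row e.1
          have honly : ∀ f ∈ Ω, f.1 = e.1 → f = e := by
            intro f hf h1
            by_contra hne'
            exact absurd (hrowclean f hf h1 hne') (not_lt.2 (hmin f hf))
          have hBrow : ∀ y, y ≠ e.2 → B e.1 y = 0 := by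
            intro y hy
            by_contra h
            have := honly (e.1, y) (hB e.1 y h) rfl
            exact hy (by simpa using congrArg Prod.snd this)
          have hCrow : ∀ y, y ≠ e.2 → C e.1 y = 0 := by
            intro y hy
            by_contra h
            have := honly (e.1, y) (hC e.1 y h) rfl
            exact hy (by simpa using congrArg Prod.snd this)
          have hBs : ∑ y, B e.1 y = B e.1 e.2 :=
            Finset.sum_eq_single e.2 (fun y _ hy => hBrow y hy) (by simp)
          have hCs : ∑ y, C e.1 y = C e.1 e.2 :=
            Finset.sum_eq_single e.2 (fun y _ hy => hCrow y hy) (by simp)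
          rw [← hBs, ← hCs]; exact hrow e.1
        · have honly : ∀ f ∈ Ω, f.2 = e.2 → f = e := by
            intro f hf h1
            by_contra hne'
            exact absurd (hcolclean f hf h1 hne') (not_lt.2 (hmin f hf))
          have hBcol : ∀ x, x ≠ e.1 → B x e.2 = 0 := by
            intro x hx
            by_contra h
            have := honly (x, e.2) (hB x e.2 h) rfl
            exact hx (by simpa using congrArg Prod.fst this)
          have hCcol : ∀ x, x ≠ e.1 → C x e.2 = 0 := by
            intro x hx
            by_contra h
            have := honly (x, e.2) (hC x e.2 h) rfl
            exact hx (by simpa using congrArg Prod.fst this)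
          have hBs : ∑ x, B x e.2 = B e.1 e.2 :=
            Finset.sum_eq_single e.1 (fun x _ hx => hBcol x hx) (by simp)
          have hCs : ∑ x, C x e.2 = C e.1 e.2 :=
            Finset.sum_eq_single e.1 (fun x _ hx => hCcol x hx) (by simp)
          rw [← hBs, ← hCs]; exact hcol e.2
      set B' : Matrix (Fin n) (Fin m) ℝ := fun x y => if x = e.1 ∧ y = e.2 then 0 else B x y with hB'def
      set C' : Matrix (Fin n) (Fin m) ℝ := fun x y => if x = e.1 ∧ y = e.2 then 0 else C x y with hC'def
      have hmem : ∀ (x : Fin n) (y : Fin m), ¬ (x = e.1 ∧ y = e.2) → (x, y) ≠ e := by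
        intro x y h hxy
        exact h ⟨congrArg Prod.fst hxy, congrArg Prod.snd hxy⟩
      have hBC' : B' = C' := by
        apply ih (Ω.erase e) (Finset.erase_ssubset heΩ)
        · intro e' he'
          rcases hpeel e' (Finset.mem_of_mem_erase he') with h | h
          · exact Or.inl (fun f hf => h f (Finset.mem_of_mem_erase hf))
          · exact Or.inr (fun f hf => h f (Finset.mem_of_mem_erase hf))
        · intro x y hxy
          have h1 : ¬ (x = e.1 ∧ y = e.2) := by
            intro h; rw [hB'def] at hxy; simp [h] at hxy
          have h2 : B x y ≠ 0 := by
            intro h; rw [hB'def] at hxy; simp [h] at hxy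
          exact Finset.mem_erase.2 ⟨hmem x y h1, hB x y h2⟩
        · intro x y hxy
          have h1 : ¬ (x = e.1 ∧ y = e.2) := by
            intro h; rw [hC'def] at hxy; simp [h] at hxy
          have h2 : C x y ≠ 0 := by
            intro h; rw [hC'def] at hxy; simp [h] at hxy
          exact Finset.mem_erase.2 ⟨hmem x y h1, hC x y h2⟩
        · intro x
          by_cases hx : x = e.1
          · have hb : ∑ y, B' x y = (∑ y, B x y) - B x e.2 := by
              rw [hB'def]; simp only [hx, eq_self_iff_true, true_and]
              exact sum_ite_zero (B e.1) e.2
            have hc : ∑ y, C' x y = (∑ y, C x y) - C x e.2 := by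
              rw [hC'def]; simp only [hx, eq_self_iff_true, true_and]
              exact sum_ite_zero (C e.1) e.2
            have key' : B x e.2 = C x e.2 := by rw [hx]; exact key
            rw [hb, hc, hrow x, key']
          · have hb : ∀ y, B' x y = B x y := by
              intro y; rw [hB'def]; simp [hx]
            have hc : ∀ y, C' x y = C x y := by
              intro y; rw [hC'def]; simp [hx]
            simp only [hb, hc]; exact hrow x
        · intro y
          by_cases hy : y = e.2
          · have hb : ∑ x, B' x y = (∑ x, B x y) - B e.1 y := by
              rw [hB'def]; simp only [hy, eq_self_iff_true, and_true]
              exact sum_ite_zero (fun x => B x e.2) e.1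
            have hc : ∑ x, C' x y = (∑ x, C x y) - C e.1 y := by
              rw [hC'def]; simp only [hy, eq_self_iff_true, and_true]
              exact sum_ite_zero (fun x => C x e.2) e.1
            have key' : B e.1 y = C e.1 y := by rw [hy]; exact key
            rw [hb, hc, hcol y, key']
          · have hb : ∀ x, B' x y = B x y := by
              intro x; rw [hB'def]; simp [hy]
            have hc : ∀ x, C' x y = C x y := by
              intro x; rw [hC'def]; simp [hy]
            simp only [hb, hc]; exact hcol y
      funext x y
      rcases Classical.em (x = e.1 ∧ y = e.2) with ⟨rfl, rfl⟩ | h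
      · exact key
      · have := congrFun (congrFun hBC' x) y
        rw [hB'def, hC'def] at this
        simpa [if_neg h] using this







/-! ### solutions -/

structure Sol (p q a b s : ℕ) where
  F : ℕ → ℕ → ℕ
  row_bound : ∀ i j, a ≤ i → F i j = 0
  col_bound : ∀ i j, b ≤ j → F i j = 0
  rows : ∀ i < a, ∑ j ∈ Finset.range b, F i j = q
  cols : ∀ j < b, ∑ i ∈ Finset.range a, F i j = p
  rk : ℕ × ℕ → ℕ
  peel : ∀ x y, F x y ≠ 0 →
    (∀ x', F x' y ≠ 0 → x' ≠ x → rk (x', y) < rk (x, y)) ∨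
    (∀ y', F x y' ≠ 0 → y' ≠ y → rk (x, y') < rk (x, y))
  scard : (((Finset.range a) ×ˢ (Finset.range b)).filter (fun e => F e.1 e.2 ≠ 0)).card
      = a + b - s

/-! ### number theory facts -/

lemma nt_facts {p q : ℕ} (hp : 2 ≤ p) (hq : 2 ≤ q) (hco : Nat.Coprime p q) :
    ∃ a1 b1, 0 < a1 ∧ a1 < p ∧ 0 < b1 ∧ b1 < q ∧ p * b1 = q * a1 + 1 ∧
      (∀ i, 0 < i → i < a1 → ¬ (p ∣ q * i + 1)) := by
  haveI : NeZero p := ⟨by omega⟩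
  set u : (ZMod p)ˣ := ZMod.unitOfCoprime q hco.symm with hu
  have hucoe : (u : ZMod p) = (q : ZMod p) := ZMod.coe_unitOfCoprime q hco.symm
  set x0 : ZMod p := -(↑u⁻¹) with hx0
  set a1 := x0.val with ha1def
  have hkey : (q : ZMod p) * x0 = -1 := by
    rw [hx0, ← hucoe, mul_neg]
    norm_cast
    rw [mul_inv_cancel]
    simp
  have hcast : ((a1 : ℕ) : ZMod p) = x0 := ZMod.natCast_rightInverse x0
  have hdvd : p ∣ q * a1 + 1 := by
    rw [← ZMod.natCast_eq_zero_iff]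
    push_cast
    rw [hcast, hkey]
    ring
  have ha1p : a1 < p := ZMod.val_lt x0
  have ha1pos : 0 < a1 := by
    rcases Nat.eq_zero_or_pos a1 with h | h
    · rw [h] at hdvd
      simp at hdvd
      omega
    · exact h
  have hmin : ∀ i, 0 < i → i < a1 → ¬ (p ∣ q * i + 1) := by
    intro i hi1 hi2 hdvd'
    have h1 : ((q * i + 1 : ℕ) : ZMod p) = 0 := by
      rw [ZMod.natCast_eq_zero_iff]; exact hdvd'
    push_cast at h1
    have h2 : (q : ZMod p) * i = -1 := by linear_combination h1
    have h3 : (q : ZMod p) * i = (q : ZMod p) * x0 := by rw [h2, hkey]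
    rw [← hucoe] at h3
    have h4 : (i : ZMod p) = x0 := (Units.mul_right_inj u).mp h3
    have h5 : (i : ZMod p).val = i := ZMod.val_cast_of_lt (by omega)
    rw [h4] at h5
    omega
  set b1 := (q * a1 + 1) / p with hb1def
  have heq : p * b1 = q * a1 + 1 := Nat.mul_div_cancel' hdvd
  have hb1pos : 0 < b1 := by
    rcases Nat.eq_zero_or_pos b1 with h | h
    · rw [h, Nat.mul_zero] at heq; omega
    · exact h
  have hb1q : b1 < q := by
    by_contra hb
    push_neg at hb
    have h1 : p * q ≤ p * b1 := Nat.mul_le_mul_left p hb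
    have h2 : q * a1 ≤ q * (p - 1) := Nat.mul_le_mul_left q (by omega)
    have h3 : q * ((p-1)+1) = q * (p-1) + q := Nat.mul_succ q _
    have h4 : (p-1)+1 = p := by omega
    rw [h4] at h3
    have h5 : q * p = p * q := Nat.mul_comm q p
    omega
  exact ⟨a1, b1, ha1pos, ha1p, hb1pos, hb1q, heq, hmin⟩

/-! ### the three staircases -/

def baseStair (p q : ℕ) (hp : 2 ≤ p) (hq : 2 ≤ q) (hco : Nat.Coprime p q) : StairData where
  R := fun i => q * min i p
  C := fun j => p * min j q
  a := p
  b := q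
  ha := by omega
  hb := by omega
  hR0 := by simp
  hC0 := by simp
  hRlt := by
    intro i hi
    show q * min i p < q * min (i+1) p
    have h1 : min i p = i := by omega
    have h2 : min (i+1) p = i + 1 := by omega
    rw [h1, h2, Nat.mul_succ]
    omega
  hClt := by
    intro j hj
    show p * min j q < p * min (j+1) q
    have h1 : min j q = j := by omega
    have h2 : min (j+1) q = j + 1 := by omega
    rw [h1, h2, Nat.mul_succ]
    omega
  hRstab := by
    intro i hi
    show q * min i p = q * min p p
    rw [Nat.min_eq_right hi, min_self]
  hCstab := by
    intro j hj
    show p * min j q = p * min q q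
    rw [Nat.min_eq_right hj, min_self]
  hT := by
    show q * min p p = p * min q q
    rw [min_self, min_self, Nat.mul_comm]
  hdisj := by
    intro i j hi1 hi2 hj1 hj2 heq
    have heq : q * min i p = p * min j q := heq
    rw [Nat.min_eq_left (by omega), Nat.min_eq_left (by omega)] at heq
    have : p ∣ q * i := ⟨j, heq⟩
    have hpi : p ∣ i := (Nat.Coprime.dvd_of_dvd_mul_left hco this)
    have := Nat.le_of_dvd (by omega) hpi
    omega

def stairD1 (p q a1 b1 : ℕ) (hq : 0 < q) (hp : 2 ≤ p) (ha1 : 0 < a1) (hb1 : 0 < b1)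
    (heq : p * b1 = q * a1 + 1) (hmin : ∀ i, 0 < i → i < a1 → ¬ p ∣ q * i + 1) :
    StairData where
  R := fun i => q * min i a1
  C := fun j => if j = 0 then 0 else p * min j b1 - 1
  a := a1
  b := b1
  ha := ha1
  hb := hb1
  hR0 := by simp
  hC0 := by simp
  hRlt := by
    intro i hi
    show q * min i a1 < q * min (i+1) a1
    have h1 : min i a1 = i := by omega
    have h2 : min (i+1) a1 = i + 1 := by omega
    rw [h1, h2, Nat.mul_succ]
    omega
  hClt := by
    intro j hj
    show (if j = 0 then 0 else p * min j b1 - 1) < (if j+1 = 0 then 0 else p * min (j+1) b1 - 1)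
    rcases Nat.eq_zero_or_pos j with rfl | hj0
    · rw [if_pos rfl, if_neg (by omega : ¬((0:ℕ)+1 = 0))]
      have h2 : min (0+1) b1 = 1 := by omega
      rw [h2]
      omega
    · rw [if_neg (by omega), if_neg (by omega)]
      have h1 : min j b1 = j := by omega
      have h2 : min (j+1) b1 = j + 1 := by omega
      rw [h1, h2, Nat.mul_succ]
      omega
  hRstab := by
    intro i hi
    show q * min i a1 = q * min a1 a1
    rw [Nat.min_eq_right hi, min_self]
  hCstab := by
    intro j hj
    show (if j = 0 then 0 else p * min j b1 - 1) = (if b1 = 0 then 0 else p * min b1 b1 - 1)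
    rw [if_neg (by omega), if_neg (by omega), Nat.min_eq_right hj, min_self]
  hT := by
    show q * min a1 a1 = (if b1 = 0 then 0 else p * min b1 b1 - 1)
    rw [if_neg (by omega), min_self, min_self]
    omega
  hdisj := by
    intro i j hi1 hi2 hj1 hj2 heq'
    have heq2 : q * min i a1 = (if j = 0 then 0 else p * min j b1 - 1) := heq'
    rw [Nat.min_eq_left (by omega), if_neg (by omega), Nat.min_eq_left (by omega)] at heq2
    have hpj : 1 ≤ p * j := by
      have h9 : 1 * 1 ≤ p * j := Nat.mul_le_mul (by omega) (by omega)
      omega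
    have hdv : p ∣ q * i + 1 := ⟨j, by omega⟩
    exact hmin i hi1 hi2 hdv

def stairD2 (p q a2 b2 : ℕ) (hq : 2 ≤ q) (hp : 0 < p) (ha2 : 0 < a2) (ha2p : a2 < p)
    (hco : Nat.Coprime p q) (heq : q * a2 = p * b2 + 1) : StairData where
  R := fun i => q * min i a2
  C := fun j => if j ≤ b2 then p * j else p * b2 + 1
  a := a2
  b := b2 + 1
  ha := ha2
  hb := by omega
  hR0 := by simp
  hC0 := by simp
  hRlt := by
    intro i hi
    show q * min i a2 < q * min (i+1) a2
    have h1 : min i a2 = i := by omega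
    have h2 : min (i+1) a2 = i + 1 := by omega
    rw [h1, h2, Nat.mul_succ]
    omega
  hClt := by
    intro j hj
    show (if j ≤ b2 then p * j else p * b2 + 1) < (if j+1 ≤ b2 then p * (j+1) else p * b2 + 1)
    rcases Nat.lt_or_ge j b2 with h | h
    · rw [if_pos (by omega), if_pos (by omega), Nat.mul_succ]
      omega
    · have hj2 : j = b2 := by omega
      subst hj2
      rw [if_pos (le_refl _), if_neg (by omega)]
      omega
  hRstab := by
    intro i hi
    show q * min i a2 = q * min a2 a2
    rw [Nat.min_eq_right hi, min_self]
  hCstab := by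
    intro j hj
    show (if j ≤ b2 then p * j else p * b2 + 1) = (if b2+1 ≤ b2 then p * (b2+1) else p * b2 + 1)
    rw [if_neg (by omega), if_neg (by omega)]
  hT := by
    show q * min a2 a2 = (if b2+1 ≤ b2 then p * (b2+1) else p * b2 + 1)
    rw [min_self, if_neg (by omega)]
    omega
  hdisj := by
    intro i j hi1 hi2 hj1 hj2 heq'
    have heq2 : q * min i a2 = (if j ≤ b2 then p * j else p * b2 + 1) := heq'
    rw [Nat.min_eq_left (by omega), if_pos (by omega)] at heq2
    have hdv : p ∣ q * i := ⟨j, heq2⟩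
    have hpi : p ∣ i := Nat.Coprime.dvd_of_dvd_mul_left hco hdv
    have := Nat.le_of_dvd (by omega) hpi
    omega

/-- last column of D2 -/
lemma stairD2_lastcol (p q a2 b2 : ℕ) (hq : 2 ≤ q) (hp : 0 < p) (ha2 : 0 < a2)
    (ha2p : a2 < p) (hco : Nat.Coprime p q) (heq : q * a2 = p * b2 + 1) (i : ℕ) :
    (stairD2 p q a2 b2 hq hp ha2 ha2p hco heq).N i b2
      = if i = a2 - 1 then 1 else 0 := by
  set D := stairD2 p q a2 b2 hq hp ha2 ha2p hco heq with hD
  have hC1 : D.C b2 = p * b2 := by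
    show (if b2 ≤ b2 then p * b2 else p * b2 + 1) = p * b2
    rw [if_pos (le_refl _)]
  have hC2 : D.C (b2+1) = p * b2 + 1 := by
    show (if b2+1 ≤ b2 then p * (b2+1) else p * b2 + 1) = p * b2 + 1
    rw [if_neg (by omega)]
  rcases Nat.lt_or_ge i a2 with hi | hi
  · rcases Nat.eq_or_lt_of_le (Nat.succ_le_of_lt hi) with h | h
    · -- i+1 = a2, i.e. i = a2 - 1
      have hieq : i = a2 - 1 := by omega
      rw [if_pos hieq]
      have hR1 : D.R i = q * i := by
        show q * min i a2 = q * i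
        rw [Nat.min_eq_left (by omega)]
      have hR2 : D.R (i+1) = q * a2 := by
        show q * min (i+1) a2 = q * a2
        rw [show min (i+1) a2 = a2 from by omega]
      have hqi : q * i + q = q * a2 := by
        rw [← h, Nat.mul_succ]
      show stair D.R D.C i b2 = 1
      rw [stair_eq]
      have hqa : q * i + q = q * a2 := by rw [← h, Nat.mul_succ]
      rw [hR1, hR2, hC1, hC2]
      omega
    · -- i + 1 < a2
      rw [if_neg (by omega)]
      have hR2 : D.R (i+1) = q * (i+1) := by
        show q * min (i+1) a2 = q * (i+1)
        rw [Nat.min_eq_left (by omega)]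
      have h2 : q * (i+1) ≤ q * (a2-1) := Nat.mul_le_mul_left q (by omega)
      have h3 : q * ((a2-1)+1) = q * (a2-1) + q := Nat.mul_succ q _
      have h4 : (a2-1)+1 = a2 := by omega
      rw [h4] at h3
      show stair D.R D.C i b2 = 0
      rw [stair_eq, hR2, hC1, hC2]
      omega
  · rw [if_neg (by omega)]
    have hDa : D.a = a2 := rfl
    exact D.row_zero (by omega) b2


def solOfStair (p q : ℕ) (D : StairData) (hrow : ∀ i < D.a, D.R (i+1) - D.R i = q)
    (hcol : ∀ j < D.b, D.C (j+1) - D.C j = p) : Sol p q D.a D.b 1 where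
  F := D.N
  row_bound := fun i j hi => D.row_zero hi j
  col_bound := fun i j hj => D.col_zero hj i
  rows := fun i hi => by rw [D.row_sum hi (le_refl _), hrow i hi]
  cols := fun j hj => by rw [D.col_sum hj (le_refl _), hcol j hj]
  rk := fun e => e.1 + e.2
  peel := by
    intro x y h
    rcases D.peel_fwd h with h1 | h1
    · right
      intro y' hy' hne
      have := h1 y' hy'
      show x + y' < x + y
      omega
    · left
      intro x' hx' hne
      have := h1 x' hx'
      show x' + y < x + y
      omega
  scard := D.suppF_card

lemma StairData.heavy (D : StairData) (h : D.a + D.b - 1 < D.R D.a) :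
    ∃ i j, 2 ≤ D.N i j := by
  by_contra hc
  push_neg at hc
  have hle : ∀ i j, D.N i j ≤ 1 := fun i j => by have := hc i j; omega
  have htel : ∑ i ∈ Finset.range D.a, (D.R (i+1) - D.R i) = D.R D.a := by
    have key : ∀ k, ∑ i ∈ Finset.range k, (D.R (i+1) - D.R i) = D.R k - D.R 0 := by
      intro k
      induction k with
      | zero => simp
      | succ k ih =>
        rw [Finset.sum_range_succ, ih]
        have h1 : D.R k ≤ D.R (k+1) := D.monoR (by omega)
        have h2 : D.R 0 ≤ D.R k := D.monoR (by omega)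
        omega
    rw [key, D.hR0]
    omega
  have htot : ∑ e ∈ (Finset.range D.a) ×ˢ (Finset.range D.b), D.N e.1 e.2 = D.R D.a := by
    rw [Finset.sum_product]
    rw [← htel]
    apply Finset.sum_congr rfl
    intro i hi
    exact D.row_sum (Finset.mem_range.1 hi) (le_refl _)
  have hfil : ∑ e ∈ D.suppF, D.N e.1 e.2
      = ∑ e ∈ (Finset.range D.a) ×ˢ (Finset.range D.b), D.N e.1 e.2 :=
    Finset.sum_filter_ne_zero _
  have hbound : ∑ e ∈ D.suppF, D.N e.1 e.2 ≤ D.suppF.card • 1 :=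
    Finset.sum_le_card_nsmul _ _ 1 (fun e _ => hle e.1 e.2)
  rw [hfil, htot, D.suppF_card] at hbound
  simp only [smul_eq_mul, Nat.mul_one] at hbound
  omega

lemma sum_point1 (P : Prop) [Decidable P] (M b v : ℕ) :
    ∑ y ∈ Finset.range M, (if P ∧ y = b then v else 0) = if P ∧ b < M then v else 0 := by
  by_cases hP : P
  · simp only [hP, true_and]
    rw [Finset.sum_ite_eq' (Finset.range M) b (fun _ => v)]
    simp [Finset.mem_range]
  · simp [hP]

lemma sum_point2 (P : Prop) [Decidable P] (M a v : ℕ) :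
    ∑ x ∈ Finset.range M, (if x = a ∧ P then v else 0) = if a < M ∧ P then v else 0 := by
  by_cases hP : P
  · simp only [hP, and_true]
    rw [Finset.sum_ite_eq' (Finset.range M) a (fun _ => v)]
    simp [Finset.mem_range]
  · simp [hP]

lemma sum_shift (f : ℕ → ℕ) (B L : ℕ) :
    ∑ y ∈ Finset.range (B + L), (if B ≤ y then f (y - B) else 0) = ∑ y ∈ Finset.range L, f y := by
  rw [Finset.range_eq_Ico, ← Finset.sum_Ico_consecutive _ (Nat.zero_le B) (Nat.le_add_right B L)]
  have h1 : ∑ y ∈ Finset.Ico 0 B, (if B ≤ y then f (y - B) else 0) = 0 := by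
    apply Finset.sum_eq_zero
    intro y hy
    rw [Finset.mem_Ico] at hy
    rw [if_neg (by omega)]
  have h2 : ∑ y ∈ Finset.Ico B (B + L), (if B ≤ y then f (y - B) else 0)
      = ∑ y ∈ Finset.range L, f y := by
    rw [Finset.sum_Ico_eq_sum_range]
    apply Finset.sum_congr (by rw [Nat.add_sub_cancel_left])
    intro i _
    rw [if_pos (Nat.le_add_right B i), Nat.add_sub_cancel_left]
  rw [h1, h2, Nat.zero_add]

lemma sum_band (f : ℕ → ℕ) (M l u : ℕ) (hu : u ≤ M) :
    ∑ y ∈ Finset.range M, (if l ≤ y ∧ y < u then f (y - l) else 0)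
      = ∑ y ∈ Finset.range (u - l), f y := by
  rcases le_or_gt l u with hlu | hlu
  · have hfil : (Finset.range M).filter (fun y => l ≤ y ∧ y < u) = Finset.Ico l u := by
      ext z
      simp only [Finset.mem_filter, Finset.mem_range, Finset.mem_Ico]
      omega
    rw [← Finset.sum_filter, hfil, Finset.sum_Ico_eq_sum_range]
    apply Finset.sum_congr rfl
    intro i _
    rw [Nat.add_sub_cancel_left]
  · have h0 : u - l = 0 := by omega
    rw [h0]
    simp only [Finset.range_zero, Finset.sum_empty]
    apply Finset.sum_eq_zero
    intro y _
    rw [if_neg (by omega)]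

lemma sum_pad (f : ℕ → ℕ) {b b' : ℕ} (h : b ≤ b') (hz : ∀ j, b ≤ j → f j = 0) :
    ∑ j ∈ Finset.range b', f j = ∑ j ∈ Finset.range b, f j := by
  symm
  apply Finset.sum_subset (by intro x hx; simp only [Finset.mem_range] at *; omega)
  intro x _ hx
  simp only [Finset.mem_range] at hx
  exact hz x (by omega)


def connG (F N1 N2 : ℕ → ℕ → ℕ) (A B p q a1 b1 r c : ℕ) (x y : ℕ) : ℕ :=
  (F x y - (if x = r ∧ y = c then 1 else 0))
  + (if x = r ∧ y = B then 1 else 0)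
  + (if A ≤ x ∧ B ≤ y then N1 (x - A) (y - B) else 0)
  + (if A + a1 ≤ x ∧ B + b1 ≤ y ∧ y < B + q then N2 (x - (A + a1)) (y - (B + b1)) else 0)
  + (if x = A + p - 1 ∧ y = c then 1 else 0)

def connRk (rkF : ℕ × ℕ → ℕ) (A B p q a1 b1 b2 : ℕ) (e : ℕ × ℕ) : ℕ :=
  if e.1 < A ∧ e.2 < B then (p + q + 3) + rkF e
  else if e.1 < A then a1 + b1 + 1
  else if e.1 < A + a1 then (a1 + b1) - ((e.1 - A) + (e.2 - B))
  else (a1 + b1 + 2) + (e.1 - (A + a1)) + (if e.2 < B then b2 else e.2 - (B + b1))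

-- appended to main.lean for testing

lemma conn_step {p q : ℕ} (hp : 2 ≤ p) (hq : 2 ≤ q) (hco : Nat.Coprime p q)
    {A B : ℕ} (S : Sol p q A B 1) {r c : ℕ} (hheavy : 2 ≤ S.F r c) :
    ∃ S' : Sol p q (A + p) (B + q) 1, ∃ r' c', 2 ≤ S'.F r' c' := by
  obtain ⟨a1, b1, ha1pos, ha1p, hb1pos, hb1q, hpb1, hmin⟩ := nt_facts hp hq hco
  set a2 := p - a1 with ha2def
  set b2 := q - b1 with hb2def
  have ha2pos : 0 < a2 := by omega
  have ha2p : a2 < p := by omega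
  have hb2pos : 0 < b2 := by omega
  have hqa2 : q * a2 = p * b2 + 1 := by
    have e1 : q * a1 + q * a2 = q * p := by rw [← Nat.mul_add]; congr 1; omega
    have e2 : p * b1 + p * b2 = p * q := by rw [← Nat.mul_add]; congr 1; omega
    have e3 : q * p = p * q := Nat.mul_comm q p
    omega
  set D1 := stairD1 p q a1 b1 (by omega) hp ha1pos hb1pos hpb1 hmin with hD1def
  set D2 := stairD2 p q a2 b2 hq (by omega) ha2pos ha2p hco hqa2 with hD2def
  have hr : r < A := by
    by_contra h
    have := S.row_bound r c (by omega)
    omega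
  have hc : c < B := by
    by_contra h
    have := S.col_bound r c (by omega)
    omega
  have hR1diff : ∀ i, i < a1 → D1.R (i+1) - D1.R i = q := by
    intro i hi
    show q * min (i+1) a1 - q * min i a1 = q
    rw [Nat.min_eq_left (by omega), Nat.min_eq_left (by omega), Nat.mul_succ]
    omega
  have hC1diff0 : D1.C (0+1) - D1.C 0 = p - 1 := by
    show (if 0+1 = 0 then 0 else p * min (0+1) b1 - 1)
        - (if (0:ℕ) = 0 then 0 else p * min 0 b1 - 1) = p - 1
    rw [if_neg (by omega), if_pos rfl, Nat.min_eq_left (by omega)]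
    omega
  have hC1diff : ∀ j, 0 < j → j < b1 → D1.C (j+1) - D1.C j = p := by
    intro j hj0 hj
    show (if j+1 = 0 then 0 else p * min (j+1) b1 - 1)
        - (if j = 0 then 0 else p * min j b1 - 1) = p
    rw [if_neg (by omega), if_neg (by omega), Nat.min_eq_left (by omega),
        Nat.min_eq_left (by omega), Nat.mul_succ]
    have h9 : 1 * 1 ≤ p * j := Nat.mul_le_mul (by omega) (by omega)
    omega
  have hR2diff : ∀ i, i < a2 → D2.R (i+1) - D2.R i = q := by
    intro i hi
    show q * min (i+1) a2 - q * min i a2 = q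
    rw [Nat.min_eq_left (by omega), Nat.min_eq_left (by omega), Nat.mul_succ]
    omega
  have hC2diff : ∀ j, j < b2 → D2.C (j+1) - D2.C j = p := by
    intro j hj
    show (if j+1 ≤ b2 then p * (j+1) else p * b2 + 1)
        - (if j ≤ b2 then p * j else p * b2 + 1) = p
    rw [if_pos (by omega), if_pos (by omega), Nat.mul_succ]
    omega
  have hD1a : D1.a = a1 := rfl
  have hD1b : D1.b = b1 := rfl
  have hD2a : D2.a = a2 := rfl
  have hD2b : D2.b = b2 + 1 := rfl
  have hlast : ∀ i, D2.N i b2 = if i = a2 - 1 then 1 else 0 :=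
    stairD2_lastcol p q a2 b2 hq (by omega) ha2pos ha2p hco hqa2
  set G := connG S.F D1.N D2.N A B p q a1 b1 r c with hGdef
  have hGapp : ∀ x y, G x y =
      (S.F x y - (if x = r ∧ y = c then 1 else 0))
      + (if x = r ∧ y = B then 1 else 0)
      + (if A ≤ x ∧ B ≤ y then D1.N (x - A) (y - B) else 0)
      + (if A + a1 ≤ x ∧ B + b1 ≤ y ∧ y < B + q then D2.N (x - (A + a1)) (y - (B + b1)) else 0)
      + (if x = A + p - 1 ∧ y = c then 1 else 0) := fun x y => rfl
  have hchar_old : ∀ x y, x < A → y < B →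
      G x y = S.F x y - (if x = r ∧ y = c then 1 else 0) := by
    intro x y hx hy
    rw [hGapp, if_neg (by omega : ¬(x = r ∧ y = B)), if_neg (by omega : ¬(A ≤ x ∧ B ≤ y)),
        if_neg (by omega : ¬(A + a1 ≤ x ∧ B + b1 ≤ y ∧ y < B + q)),
        if_neg (by omega : ¬(x = A + p - 1 ∧ y = c))]
    simp
  have hchar_root1 : ∀ x y, x < A → B ≤ y → G x y = (if x = r ∧ y = B then 1 else 0) := by
    intro x y hx hy
    rw [hGapp, S.col_bound x y (by omega), if_neg (by omega : ¬(x = r ∧ y = c)),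
        if_neg (by omega : ¬(A ≤ x ∧ B ≤ y)),
        if_neg (by omega : ¬(A + a1 ≤ x ∧ B + b1 ≤ y ∧ y < B + q)),
        if_neg (by omega : ¬(x = A + p - 1 ∧ y = c))]
    simp
  have hchar_P1 : ∀ x y, A ≤ x → x < A + a1 →
      G x y = (if B ≤ y then D1.N (x - A) (y - B) else 0) := by
    intro x y hx hx2
    rw [hGapp, S.row_bound x y (by omega), if_neg (by omega : ¬(x = r ∧ y = c)),
        if_neg (by omega : ¬(x = r ∧ y = B)),
        if_neg (by omega : ¬(A + a1 ≤ x ∧ B + b1 ≤ y ∧ y < B + q)),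
        if_neg (by omega : ¬(x = A + p - 1 ∧ y = c))]
    by_cases hBy : B ≤ y
    · rw [if_pos (⟨hx, hBy⟩ : A ≤ x ∧ B ≤ y), if_pos hBy]
      simp
    · rw [if_neg (fun h => hBy h.2), if_neg hBy]
  have hchar_P2 : ∀ x y, A + a1 ≤ x → G x y =
      (if A + a1 ≤ x ∧ B + b1 ≤ y ∧ y < B + q then D2.N (x - (A + a1)) (y - (B + b1)) else 0)
      + (if x = A + p - 1 ∧ y = c then 1 else 0) := by
    intro x y hx
    rw [hGapp, S.row_bound x y (by omega), if_neg (by omega : ¬(x = r ∧ y = c)),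
        if_neg (by omega : ¬(x = r ∧ y = B))]
    have h3 : (if A ≤ x ∧ B ≤ y then D1.N (x - A) (y - B) else 0) = 0 := by
      by_cases h : A ≤ x ∧ B ≤ y
      · rw [if_pos h, D1.row_zero (show D1.a ≤ x - A by rw [hD1a]; omega)]
      · rw [if_neg h]
    rw [h3]
    simp
  have hclass : ∀ x y, G x y ≠ 0 →
      (x < A ∧ y < B ∧ S.F x y ≠ 0) ∨
      (x = r ∧ y = B) ∨
      (A ≤ x ∧ x < A + a1 ∧ B ≤ y ∧ y < B + b1 ∧ D1.N (x - A) (y - B) ≠ 0) ∨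
      (A + a1 ≤ x ∧ x < A + p ∧ B + b1 ≤ y ∧ y < B + q ∧ D2.N (x - (A + a1)) (y - (B + b1)) ≠ 0) ∨
      (x = A + p - 1 ∧ y = c) := by
    intro x y hxy
    rcases Nat.lt_or_ge x A with hx | hx
    · rcases Nat.lt_or_ge y B with hy | hy
      · left
        refine ⟨hx, hy, ?_⟩
        rw [hchar_old x y hx hy] at hxy
        intro h0
        rw [h0] at hxy
        simp at hxy
      · right; left
        rw [hchar_root1 x y hx hy] at hxy
        by_contra h
        rw [if_neg h] at hxy
        exact hxy rfl
    · rcases Nat.lt_or_ge x (A + a1) with hx2 | hx2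
      · right; right; left
        rw [hchar_P1 x y hx hx2] at hxy
        by_cases hBy : B ≤ y
        · rw [if_pos hBy] at hxy
          have hlt := D1.supp_lt hxy
          rw [hD1a, hD1b] at hlt
          exact ⟨hx, hx2, hBy, by omega, hxy⟩
        · rw [if_neg hBy] at hxy
          exact absurd rfl hxy
      · rw [hchar_P2 x y hx2] at hxy
        by_cases h4 : A + a1 ≤ x ∧ B + b1 ≤ y ∧ y < B + q
        · by_cases h5 : D2.N (x - (A + a1)) (y - (B + b1)) = 0
          · right; right; right; right
            rw [if_pos h4, h5] at hxy
            by_contra h6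
            rw [if_neg h6] at hxy
            exact hxy rfl
          · right; right; right; left
            have hlt := D2.supp_lt h5
            rw [hD2a] at hlt
            exact ⟨h4.1, by omega, h4.2.1, h4.2.2, h5⟩
        · right; right; right; right
          rw [if_neg h4] at hxy
          by_contra h6
          rw [if_neg h6] at hxy
          exact hxy rfl
  have hrow_bound : ∀ x y, A + p ≤ x → G x y = 0 := by
    intro x y hx
    rw [hchar_P2 x y (by omega)]
    have h4 : (if A + a1 ≤ x ∧ B + b1 ≤ y ∧ y < B + q
        then D2.N (x - (A+a1)) (y - (B+b1)) else 0) = 0 := by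
      by_cases h : A + a1 ≤ x ∧ B + b1 ≤ y ∧ y < B + q
      · rw [if_pos h, D2.row_zero (show D2.a ≤ x - (A+a1) by rw [hD2a]; omega)]
      · rw [if_neg h]
    rw [h4, if_neg (by omega : ¬(x = A + p - 1 ∧ y = c))]
  have hcol_bound : ∀ x y, B + q ≤ y → G x y = 0 := by
    intro x y hy
    rcases Nat.lt_or_ge x A with hx | hx
    · rw [hchar_root1 x y hx (by omega), if_neg (by omega : ¬(x = r ∧ y = B))]
    · rcases Nat.lt_or_ge x (A + a1) with hx2 | hx2
      · rw [hchar_P1 x y hx hx2, if_pos (by omega : B ≤ y),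
            D1.col_zero (show D1.b ≤ y - B by rw [hD1b]; omega)]
      · rw [hchar_P2 x y hx2, if_neg (by omega : ¬(A + a1 ≤ x ∧ B + b1 ≤ y ∧ y < B + q)),
            if_neg (by omega : ¬(x = A + p - 1 ∧ y = c))]
  have hrows : ∀ x, x < A + p → ∑ y ∈ Finset.range (B + q), G x y = q := by
    intro x hx
    have hGsplit : ∑ y ∈ Finset.range (B + q), G x y =
        (∑ y ∈ Finset.range (B + q), (S.F x y - (if x = r ∧ y = c then 1 else 0)))
        + (∑ y ∈ Finset.range (B + q), (if x = r ∧ y = B then 1 else 0))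
        + (∑ y ∈ Finset.range (B + q), (if A ≤ x ∧ B ≤ y then D1.N (x - A) (y - B) else 0))
        + (∑ y ∈ Finset.range (B + q),
            (if A + a1 ≤ x ∧ B + b1 ≤ y ∧ y < B + q then D2.N (x - (A + a1)) (y - (B + b1)) else 0))
        + (∑ y ∈ Finset.range (B + q), (if x = A + p - 1 ∧ y = c then 1 else 0)) := by
      rw [← Finset.sum_add_distrib, ← Finset.sum_add_distrib, ← Finset.sum_add_distrib,
          ← Finset.sum_add_distrib]
      exact Finset.sum_congr rfl (fun y _ => hGapp x y)
    rw [hGsplit, sum_point1 (x = r) (B+q) B 1, sum_point1 (x = A + p - 1) (B+q) c 1]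
    rcases Nat.lt_or_ge x A with hxA | hxA
    · -- x < A
      have hT3 : (∑ y ∈ Finset.range (B + q),
          (if A ≤ x ∧ B ≤ y then D1.N (x - A) (y - B) else 0)) = 0 :=
        Finset.sum_eq_zero (fun y _ => if_neg (by omega))
      have hT4 : (∑ y ∈ Finset.range (B + q),
          (if A + a1 ≤ x ∧ B + b1 ≤ y ∧ y < B + q
            then D2.N (x - (A + a1)) (y - (B + b1)) else 0)) = 0 :=
        Finset.sum_eq_zero (fun y _ => if_neg (by omega))
      rw [hT3, hT4, if_neg (by omega : ¬(x = A + p - 1 ∧ c < B + q))]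
      by_cases hxr : x = r
      · rw [if_pos (⟨hxr, by omega⟩ : x = r ∧ B < B + q)]
        have hsum1 : ∑ y ∈ Finset.range (B+q), S.F x y = q := by
          rw [sum_pad (S.F x) (show B ≤ B + q by omega) (fun j hj => S.col_bound x j hj)]
          exact S.rows x (by omega)
        have hT1 : ∑ y ∈ Finset.range (B+q), (S.F x y - (if x = r ∧ y = c then 1 else 0))
            = q - 1 := by
          rw [Finset.sum_tsub_distrib _ (fun y _ => by
            by_cases hyc : y = c
            · subst hyc
              rw [if_pos ⟨hxr, rfl⟩, hxr]
              omega
            · rw [if_neg (fun hh => hyc hh.2)]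
              omega)]
          rw [hsum1, sum_point1 (x = r) (B+q) c 1, if_pos (⟨hxr, by omega⟩ : x = r ∧ c < B + q)]
        rw [hT1]
        omega
      · rw [if_neg (fun hh => hxr hh.1)]
        have hT1 : ∑ y ∈ Finset.range (B+q), (S.F x y - (if x = r ∧ y = c then 1 else 0)) = q := by
          have hcg : ∀ y ∈ Finset.range (B+q),
              (S.F x y - (if x = r ∧ y = c then 1 else 0)) = S.F x y :=
            fun y _ => by rw [if_neg (fun hh => hxr hh.1), Nat.sub_zero]
          rw [Finset.sum_congr rfl hcg,
              sum_pad (S.F x) (show B ≤ B + q by omega) (fun j hj => S.col_bound x j hj)]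
          exact S.rows x (by omega)
        rw [hT1]
        omega
    · -- A ≤ x
      have hT1 : ∑ y ∈ Finset.range (B+q), (S.F x y - (if x = r ∧ y = c then 1 else 0)) = 0 :=
        Finset.sum_eq_zero (fun y _ => by
          rw [S.row_bound x y (by omega), if_neg (by omega : ¬(x = r ∧ y = c))]
          omega)
      rw [hT1, if_neg (by omega : ¬(x = r ∧ B < B + q))]
      rcases Nat.lt_or_ge x (A + a1) with hxA2 | hxA2
      · -- P1 rows
        have hT4 : (∑ y ∈ Finset.range (B + q),
            (if A + a1 ≤ x ∧ B + b1 ≤ y ∧ y < B + q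
              then D2.N (x - (A + a1)) (y - (B + b1)) else 0)) = 0 :=
          Finset.sum_eq_zero (fun y _ => if_neg (by omega))
        have hcg : ∀ y ∈ Finset.range (B+q),
            (if A ≤ x ∧ B ≤ y then D1.N (x - A) (y - B) else 0)
            = (if B ≤ y then D1.N (x - A) (y - B) else 0) := by
          intro y _
          by_cases hBy : B ≤ y
          · rw [if_pos (⟨hxA, hBy⟩ : A ≤ x ∧ B ≤ y), if_pos hBy]
          · rw [if_neg (fun h => hBy h.2), if_neg hBy]
        have hT3 : (∑ y ∈ Finset.range (B + q),
            (if A ≤ x ∧ B ≤ y then D1.N (x - A) (y - B) else 0)) = q := by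
          rw [Finset.sum_congr rfl hcg, sum_shift (D1.N (x - A)) B q,
            D1.row_sum (show x - A < D1.a by rw [hD1a]; omega) (show D1.b ≤ q by rw [hD1b]; omega)]
          exact hR1diff (x - A) (by omega)
        rw [hT3, hT4, if_neg (by omega : ¬(x = A + p - 1 ∧ c < B + q))]
        omega
      · -- P2 rows
        have hT3 : (∑ y ∈ Finset.range (B + q),
            (if A ≤ x ∧ B ≤ y then D1.N (x - A) (y - B) else 0)) = 0 :=
          Finset.sum_eq_zero (fun y _ => by
            by_cases h : A ≤ x ∧ B ≤ y
            · rw [if_pos h, D1.row_zero (show D1.a ≤ x - A by rw [hD1a]; omega)]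
            · rw [if_neg h])
        have hcg : ∀ y ∈ Finset.range (B+q),
            (if A + a1 ≤ x ∧ B + b1 ≤ y ∧ y < B + q
              then D2.N (x - (A + a1)) (y - (B + b1)) else 0)
            = (if B + b1 ≤ y ∧ y < B + q then D2.N (x - (A + a1)) (y - (B + b1)) else 0) := by
          intro y _
          by_cases h : B + b1 ≤ y ∧ y < B + q
          · rw [if_pos (⟨hxA2, h⟩ : A + a1 ≤ x ∧ B + b1 ≤ y ∧ y < B + q), if_pos h]
          · rw [if_neg (fun hh => h hh.2), if_neg h]
        have hT4 : (∑ y ∈ Finset.range (B + q),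
            (if A + a1 ≤ x ∧ B + b1 ≤ y ∧ y < B + q
              then D2.N (x - (A + a1)) (y - (B + b1)) else 0))
            = ∑ j ∈ Finset.range b2, D2.N (x - (A + a1)) j := by
          rw [Finset.sum_congr rfl hcg,
              sum_band (D2.N (x - (A + a1))) (B+q) (B+b1) (B+q) (le_refl _)]
          rw [show B + q - (B + b1) = b2 from by omega]
        have hFull : ∑ j ∈ Finset.range (b2+1), D2.N (x - (A+a1)) j = q := by
          rw [D2.row_sum (show x - (A+a1) < D2.a by rw [hD2a]; omega)
              (show D2.b ≤ b2+1 by rw [hD2b])]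
          exact hR2diff _ (by omega)
        have hEnd := Finset.sum_range_succ (D2.N (x - (A+a1))) b2
        have hLC := hlast (x - (A+a1))
        rw [hT3, hT4]
        by_cases hxe : x = A + p - 1
        · rw [if_pos (⟨hxe, by omega⟩ : x = A + p - 1 ∧ c < B + q)]
          rw [if_pos (by omega : x - (A+a1) = a2 - 1)] at hLC
          omega
        · rw [if_neg (fun hh => hxe hh.1)]
          rw [if_neg (by omega : ¬(x - (A+a1) = a2 - 1))] at hLC
          omega
  have hcols : ∀ y, y < B + q → ∑ x ∈ Finset.range (A + p), G x y = p := by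
    intro y hy
    have hGsplit : ∑ x ∈ Finset.range (A + p), G x y =
        (∑ x ∈ Finset.range (A + p), (S.F x y - (if x = r ∧ y = c then 1 else 0)))
        + (∑ x ∈ Finset.range (A + p), (if x = r ∧ y = B then 1 else 0))
        + (∑ x ∈ Finset.range (A + p), (if A ≤ x ∧ B ≤ y then D1.N (x - A) (y - B) else 0))
        + (∑ x ∈ Finset.range (A + p),
            (if A + a1 ≤ x ∧ B + b1 ≤ y ∧ y < B + q then D2.N (x - (A + a1)) (y - (B + b1)) else 0))
        + (∑ x ∈ Finset.range (A + p), (if x = A + p - 1 ∧ y = c then 1 else 0)) := by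
      rw [← Finset.sum_add_distrib, ← Finset.sum_add_distrib, ← Finset.sum_add_distrib,
          ← Finset.sum_add_distrib]
      exact Finset.sum_congr rfl (fun x _ => hGapp x y)
    rw [hGsplit, sum_point2 (y = B) (A+p) r 1, sum_point2 (y = c) (A+p) (A + p - 1) 1]
    rcases Nat.lt_or_ge y B with hyB | hyB
    · -- y < B : T2 = 0, T3 = 0, T4 = 0
      have hT3 : (∑ x ∈ Finset.range (A + p),
          (if A ≤ x ∧ B ≤ y then D1.N (x - A) (y - B) else 0)) = 0 :=
        Finset.sum_eq_zero (fun x _ => if_neg (by omega))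
      have hT4 : (∑ x ∈ Finset.range (A + p),
          (if A + a1 ≤ x ∧ B + b1 ≤ y ∧ y < B + q
            then D2.N (x - (A + a1)) (y - (B + b1)) else 0)) = 0 :=
        Finset.sum_eq_zero (fun x _ => if_neg (by omega))
      rw [hT3, hT4, if_neg (by omega : ¬(r < A + p ∧ y = B))]
      by_cases hyc : y = c
      · rw [if_pos (⟨by omega, hyc⟩ : A + p - 1 < A + p ∧ y = c)]
        have hsum1 : ∑ x ∈ Finset.range (A+p), S.F x y = p := by
          rw [sum_pad (fun x => S.F x y) (show A ≤ A + p by omega)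
            (fun i hi => S.row_bound i y hi)]
          exact S.cols y (by omega)
        have hT1 : ∑ x ∈ Finset.range (A+p), (S.F x y - (if x = r ∧ y = c then 1 else 0))
            = p - 1 := by
          rw [Finset.sum_tsub_distrib _ (fun x _ => by
            by_cases hxr : x = r
            · subst hxr
              rw [if_pos ⟨rfl, hyc⟩, hyc]
              omega
            · rw [if_neg (fun hh => hxr hh.1)]
              omega)]
          rw [hsum1, sum_point2 (y = c) (A+p) r 1, if_pos (⟨by omega, hyc⟩ : r < A + p ∧ y = c)]
        rw [hT1]
        omega
      · rw [if_neg (fun hh => hyc hh.2)]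
        have hT1 : ∑ x ∈ Finset.range (A+p), (S.F x y - (if x = r ∧ y = c then 1 else 0)) = p := by
          have hcg : ∀ x ∈ Finset.range (A+p),
              (S.F x y - (if x = r ∧ y = c then 1 else 0)) = S.F x y :=
            fun x _ => by rw [if_neg (fun hh => hyc hh.2), Nat.sub_zero]
          rw [Finset.sum_congr rfl hcg,
              sum_pad (fun x => S.F x y) (show A ≤ A + p by omega) (fun i hi => S.row_bound i y hi)]
          exact S.cols y (by omega)
        rw [hT1]
        omega
    · -- B ≤ y
      have hT1 : ∑ x ∈ Finset.range (A+p), (S.F x y - (if x = r ∧ y = c then 1 else 0)) = 0 :=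
        Finset.sum_eq_zero (fun x _ => by
          rw [S.col_bound x y (by omega), if_neg (by omega : ¬(x = r ∧ y = c))]
          omega)
      rw [hT1, if_neg (by omega : ¬(A + p - 1 < A + p ∧ y = c))]
      rcases Nat.lt_or_ge y (B + b1) with hyB2 | hyB2
      · -- T3 zone (incl y = B)
        have hT4 : (∑ x ∈ Finset.range (A + p),
            (if A + a1 ≤ x ∧ B + b1 ≤ y ∧ y < B + q
              then D2.N (x - (A + a1)) (y - (B + b1)) else 0)) = 0 :=
          Finset.sum_eq_zero (fun x _ => if_neg (by omega))
        have hcg : ∀ x ∈ Finset.range (A+p),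
            (if A ≤ x ∧ B ≤ y then D1.N (x - A) (y - B) else 0)
            = (if A ≤ x then D1.N (x - A) (y - B) else 0) := by
          intro x _
          by_cases hAx : A ≤ x
          · rw [if_pos (⟨hAx, hyB⟩ : A ≤ x ∧ B ≤ y), if_pos hAx]
          · rw [if_neg (fun h => hAx h.1), if_neg hAx]
        have hT3 : (∑ x ∈ Finset.range (A + p),
            (if A ≤ x ∧ B ≤ y then D1.N (x - A) (y - B) else 0))
            = D1.C ((y - B) + 1) - D1.C (y - B) := by
          rw [Finset.sum_congr rfl hcg, sum_shift (fun x' => D1.N x' (y - B)) A p,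
            D1.col_sum (show y - B < D1.b by rw [hD1b]; omega) (show D1.a ≤ p by rw [hD1a]; omega)]
        rw [hT3, hT4]
        by_cases hyB0 : y = B
        · rw [if_pos (⟨by omega, hyB0⟩ : r < A + p ∧ y = B)]
          rw [show y - B = 0 from by omega]
          have := hC1diff0
          omega
        · rw [if_neg (fun hh => hyB0 hh.2)]
          have := hC1diff (y - B) (by omega) (by omega)
          omega
      · -- T4 zone
        have hT2 : (if r < A + p ∧ y = B then 1 else 0) = 0 :=
          if_neg (by omega : ¬(r < A + p ∧ y = B))
        have hT3 : (∑ x ∈ Finset.range (A + p),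
            (if A ≤ x ∧ B ≤ y then D1.N (x - A) (y - B) else 0)) = 0 :=
          Finset.sum_eq_zero (fun x _ => by
            by_cases h : A ≤ x ∧ B ≤ y
            · rw [if_pos h, D1.col_zero (show D1.b ≤ y - B by rw [hD1b]; omega)]
            · rw [if_neg h])
        have hcg : ∀ x ∈ Finset.range (A+p),
            (if A + a1 ≤ x ∧ B + b1 ≤ y ∧ y < B + q
              then D2.N (x - (A + a1)) (y - (B + b1)) else 0)
            = (if A + a1 ≤ x then D2.N (x - (A + a1)) (y - (B + b1)) else 0) := by
          intro x _
          by_cases hAx : A + a1 ≤ x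
          · rw [if_pos (⟨hAx, hyB2, hy⟩ : A + a1 ≤ x ∧ B + b1 ≤ y ∧ y < B + q), if_pos hAx]
          · rw [if_neg (fun h => hAx h.1), if_neg hAx]
        have hT4 : (∑ x ∈ Finset.range (A + p),
            (if A + a1 ≤ x ∧ B + b1 ≤ y ∧ y < B + q
              then D2.N (x - (A + a1)) (y - (B + b1)) else 0)) = p := by
          rw [Finset.sum_congr rfl hcg,
              show A + p = (A + a1) + a2 from by omega,
              sum_shift (fun x' => D2.N x' (y - (B + b1))) (A + a1) a2,
              D2.col_sum (show y - (B + b1) < D2.b by rw [hD2b]; omega)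
                (show D2.a ≤ a2 by rw [hD2a])]
          exact hC2diff (y - (B + b1)) (by omega)
        rw [hT2, hT3, hT4]
        omega
  -- support description
  have hS1card : (((Finset.range A) ×ˢ (Finset.range B)).filter
      (fun e => S.F e.1 e.2 ≠ 0)).card = A + B - 1 := S.scard
  set S1 := ((Finset.range A) ×ˢ (Finset.range B)).filter (fun e => S.F e.1 e.2 ≠ 0) with hS1
  set S3 := D1.suppF.image (fun e => (e.1 + A, e.2 + B)) with hS3
  set S4 := (D2.suppF.filter (fun e => e.2 ≠ b2)).image
      (fun e => (e.1 + (A+a1), e.2 + (B+b1))) with hS4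
  have hS1mem : ∀ e : ℕ × ℕ, e ∈ S1 ↔ (e.1 < A ∧ e.2 < B ∧ S.F e.1 e.2 ≠ 0) := by
    intro e
    rw [hS1, Finset.mem_filter, Finset.mem_product, Finset.mem_range, Finset.mem_range]
    tauto
  have hS3mem : ∀ e : ℕ × ℕ, e ∈ S3 ↔
      (A ≤ e.1 ∧ e.1 < A + a1 ∧ B ≤ e.2 ∧ e.2 < B + b1 ∧ D1.N (e.1 - A) (e.2 - B) ≠ 0) := by
    intro e
    rw [hS3, Finset.mem_image]
    constructor
    · rintro ⟨w, hw, rfl⟩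
      rw [D1.mem_suppF] at hw
      have hlt := D1.supp_lt hw
      rw [hD1a, hD1b] at hlt
      refine ⟨by omega, by omega, by omega, by omega, ?_⟩
      rw [show w.1 + A - A = w.1 from by omega, show w.2 + B - B = w.2 from by omega]
      exact hw
    · rintro ⟨h1, h2, h3, h4, h5⟩
      refine ⟨(e.1 - A, e.2 - B), D1.mem_suppF.2 h5, ?_⟩
      simp only
      rw [Prod.ext_iff]
      constructor
      · simp only; omega
      · simp only; omega
  have hS4mem : ∀ e : ℕ × ℕ, e ∈ S4 ↔
      (A + a1 ≤ e.1 ∧ e.1 < A + p ∧ B + b1 ≤ e.2 ∧ e.2 < B + q ∧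
        D2.N (e.1 - (A+a1)) (e.2 - (B+b1)) ≠ 0) := by
    intro e
    rw [hS4, Finset.mem_image]
    constructor
    · rintro ⟨w, hw, rfl⟩
      rw [Finset.mem_filter, D2.mem_suppF] at hw
      have hlt := D2.supp_lt hw.1
      rw [hD2a, hD2b] at hlt
      refine ⟨by omega, by omega, by omega, ?_, ?_⟩
      · have : w.2 < b2 := by
          rcases hw with ⟨_, hne⟩
          omega
        simp only
        omega
      · rw [show w.1 + (A+a1) - (A+a1) = w.1 from by omega,
            show w.2 + (B+b1) - (B+b1) = w.2 from by omega]
        exact hw.1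
    · rintro ⟨h1, h2, h3, h4, h5⟩
      refine ⟨(e.1 - (A+a1), e.2 - (B+b1)), ?_, ?_⟩
      · rw [Finset.mem_filter, D2.mem_suppF]
        exact ⟨h5, by simp only; omega⟩
      · simp only
        rw [Prod.ext_iff]
        constructor
        · simp only; omega
        · simp only; omega
  have hunion : ((Finset.range (A+p)) ×ˢ (Finset.range (B+q))).filter
      (fun e => G e.1 e.2 ≠ 0)
      = S1 ∪ ({(r, B)} ∪ (S3 ∪ (S4 ∪ {(A + p - 1, c)}))) := by
    ext e
    rw [Finset.mem_filter, Finset.mem_product, Finset.mem_range, Finset.mem_range,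
        Finset.mem_union, Finset.mem_union, Finset.mem_union, Finset.mem_union,
        Finset.mem_singleton, Finset.mem_singleton]
    constructor
    · rintro ⟨⟨hx, hy⟩, hG⟩
      rcases hclass e.1 e.2 hG with h | h | h | h | h
      · exact Or.inl ((hS1mem e).2 ⟨h.1, h.2.1, h.2.2⟩)
      · exact Or.inr (Or.inl (Prod.ext h.1 h.2))
      · exact Or.inr (Or.inr (Or.inl ((hS3mem e).2 h)))
      · exact Or.inr (Or.inr (Or.inr (Or.inl ((hS4mem e).2 h))))
      · exact Or.inr (Or.inr (Or.inr (Or.inr (Prod.ext h.1 h.2))))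
    · intro h
      rcases h with h | h | h | h | h
      · rw [hS1mem e] at h
        refine ⟨⟨by omega, by omega⟩, ?_⟩
        rw [hchar_old e.1 e.2 h.1 h.2.1]
        by_cases hrc : e.1 = r ∧ e.2 = c
        · rw [if_pos hrc]
          have : S.F e.1 e.2 = S.F r c := by rw [hrc.1, hrc.2]
          omega
        · rw [if_neg hrc]
          omega
      · have h1 : e.1 = r := by rw [h]
        have h2 : e.2 = B := by rw [h]
        refine ⟨⟨by omega, by omega⟩, ?_⟩
        rw [hchar_root1 e.1 e.2 (by omega) (by omega), if_pos ⟨h1, h2⟩]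
        omega
      · rw [hS3mem e] at h
        refine ⟨⟨by omega, by omega⟩, ?_⟩
        rw [hchar_P1 e.1 e.2 h.1 h.2.1, if_pos h.2.2.1]
        exact h.2.2.2.2
      · rw [hS4mem e] at h
        refine ⟨⟨by omega, by omega⟩, ?_⟩
        rw [hchar_P2 e.1 e.2 h.1, if_pos (⟨h.1, h.2.2.1, h.2.2.2.1⟩ :
          A + a1 ≤ e.1 ∧ B + b1 ≤ e.2 ∧ e.2 < B + q)]
        have := h.2.2.2.2
        omega
      · have h1 : e.1 = A + p - 1 := by rw [h]
        have h2 : e.2 = c := by rw [h]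
        refine ⟨⟨by omega, by omega⟩, ?_⟩
        rw [hchar_P2 e.1 e.2 (by omega),
            if_neg (by omega : ¬(A + a1 ≤ e.1 ∧ B + b1 ≤ e.2 ∧ e.2 < B + q)),
            if_pos ⟨h1, h2⟩]
        omega
  have hS3card : S3.card = a1 + b1 - 1 := by
    rw [hS3, Finset.card_image_of_injective _ (fun u v huv => by
      rw [Prod.ext_iff] at huv
      obtain ⟨h1, h2⟩ := huv
      simp only at h1 h2
      exact Prod.ext (by omega) (by omega))]
    have := D1.suppF_card
    rw [hD1a, hD1b] at this
    exact this
  have hS4card : S4.card = a2 + b2 - 1 := by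
    rw [hS4, Finset.card_image_of_injective _ (fun u v huv => by
      rw [Prod.ext_iff] at huv
      obtain ⟨h1, h2⟩ := huv
      simp only at h1 h2
      exact Prod.ext (by omega) (by omega))]
    have hfil : D2.suppF.filter (fun e => e.2 = b2) = {(a2 - 1, b2)} := by
      ext f
      rw [Finset.mem_filter, D2.mem_suppF, Finset.mem_singleton]
      constructor
      · rintro ⟨hne, hf2⟩
        rw [hf2, hlast f.1] at hne
        have : f.1 = a2 - 1 := by
          by_contra hcc
          rw [if_neg hcc] at hne
          exact hne rfl
        exact Prod.ext this hf2
      · rintro rfl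
        refine ⟨?_, rfl⟩
        show D2.N (a2 - 1) b2 ≠ 0
        rw [hlast (a2 - 1), if_pos rfl]
        omega
    have hsplit := Finset.card_filter_add_card_filter_not
      (s := D2.suppF) (p := fun e => e.2 = b2)
    rw [hfil, Finset.card_singleton] at hsplit
    have hfull := D2.suppF_card
    rw [hD2a, hD2b] at hfull
    have hee : (Finset.filter (fun e => ¬ e.2 = b2) D2.suppF).card
        = (Finset.filter (fun e => e.2 ≠ b2) D2.suppF).card := rfl
    omega
  have hscard : (((Finset.range (A+p)) ×ˢ (Finset.range (B+q))).filter
      (fun e => G e.1 e.2 ≠ 0)).card = (A + p) + (B + q) - 1 := by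
    rw [hunion]
    have hd45 : Disjoint S4 ({(A + p - 1, c)} : Finset (ℕ × ℕ)) := by
      rw [Finset.disjoint_left]
      intro e he1 he2
      rw [hS4mem e] at he1
      rw [Finset.mem_singleton] at he2
      have : e.2 = c := by rw [he2]
      omega
    have hd3 : Disjoint S3 (S4 ∪ {(A + p - 1, c)}) := by
      rw [Finset.disjoint_left]
      intro e he1 he2
      rw [hS3mem e] at he1
      rcases Finset.mem_union.1 he2 with h | h
      · rw [hS4mem e] at h
        omega
      · rw [Finset.mem_singleton] at h
        have : e.1 = A + p - 1 := by rw [h]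
        omega
    have hd2 : Disjoint ({(r, B)} : Finset (ℕ × ℕ)) (S3 ∪ (S4 ∪ {(A + p - 1, c)})) := by
      rw [Finset.disjoint_left]
      intro e he1 he2
      rw [Finset.mem_singleton] at he1
      have he11 : e.1 = r := by rw [he1]
      have he12 : e.2 = B := by rw [he1]
      rcases Finset.mem_union.1 he2 with h | h
      · rw [hS3mem e] at h; omega
      · rcases Finset.mem_union.1 h with h' | h'
        · rw [hS4mem e] at h'; omega
        · rw [Finset.mem_singleton] at h'
          have : e.2 = c := by rw [h']
          omega
    have hd1 : Disjoint S1 ({(r, B)} ∪ (S3 ∪ (S4 ∪ {(A + p - 1, c)}))) := by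
      rw [Finset.disjoint_left]
      intro e he1 he2
      rw [hS1mem e] at he1
      rcases Finset.mem_union.1 he2 with h | h
      · rw [Finset.mem_singleton] at h
        have : e.2 = B := by rw [h]
        omega
      · rcases Finset.mem_union.1 h with h' | h'
        · rw [hS3mem e] at h'; omega
        · rcases Finset.mem_union.1 h' with h'' | h''
          · rw [hS4mem e] at h''; omega
          · rw [Finset.mem_singleton] at h''
            have : e.1 = A + p - 1 := by rw [h'']
            omega
    rw [Finset.card_union_of_disjoint hd1, Finset.card_union_of_disjoint hd2,
        Finset.card_union_of_disjoint hd3, Finset.card_union_of_disjoint hd45,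
        Finset.card_singleton, Finset.card_singleton, hS1card, hS3card, hS4card]
    omega
  -- rank evaluations
  set RK := connRk S.rk A B p q a1 b1 b2 with hRK
  have hrk1 : ∀ x y, x < A → y < B → RK (x, y) = (p + q + 3) + S.rk (x, y) := by
    intro x y h1 h2
    show (if x < A ∧ y < B then _ else _) = _
    rw [if_pos ⟨h1, h2⟩]
  have hrk2 : ∀ x y, x < A → B ≤ y → RK (x, y) = a1 + b1 + 1 := by
    intro x y h1 h2
    show (if x < A ∧ y < B then _ else _) = _
    rw [if_neg (by omega : ¬(x < A ∧ y < B)), if_pos h1]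
  have hrk3 : ∀ x y, A ≤ x → x < A + a1 → RK (x, y) = (a1 + b1) - ((x - A) + (y - B)) := by
    intro x y h1 h2
    show (if x < A ∧ y < B then _ else _) = _
    rw [if_neg (by omega : ¬(x < A ∧ y < B)), if_neg (by omega : ¬ x < A), if_pos h2]
  have hrk4a : ∀ x y, A + a1 ≤ x → y < B →
      RK (x, y) = (a1 + b1 + 2) + (x - (A + a1)) + b2 := by
    intro x y h1 h2
    show (if x < A ∧ y < B then _ else _) = _
    rw [if_neg (by omega : ¬(x < A ∧ y < B)), if_neg (by omega : ¬ x < A),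
        if_neg (by omega : ¬ x < A + a1), if_pos h2]
  have hrk4b : ∀ x y, A + a1 ≤ x → B ≤ y →
      RK (x, y) = (a1 + b1 + 2) + (x - (A + a1)) + (y - (B + b1)) := by
    intro x y h1 h2
    show (if x < A ∧ y < B then _ else _) = _
    rw [if_neg (by omega : ¬(x < A ∧ y < B)), if_neg (by omega : ¬ x < A),
        if_neg (by omega : ¬ x < A + a1), if_neg (by omega : ¬ y < B)]
  -- the peeling property
  have hpeel : ∀ x y, G x y ≠ 0 →
      (∀ x', G x' y ≠ 0 → x' ≠ x → RK (x', y) < RK (x, y)) ∨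
      (∀ y', G x y' ≠ 0 → y' ≠ y → RK (x, y') < RK (x, y)) := by
    intro x y hG
    rcases hclass x y hG with hreg | hreg | hreg | hreg | hreg
    · -- old cell
      obtain ⟨hx, hy, hF⟩ := hreg
      rcases S.peel x y hF with hL | hR
      · left
        intro x' hG' hne
        rcases hclass x' y hG' with h' | h' | h' | h' | h'
        · rw [hrk1 x' y h'.1 h'.2.1, hrk1 x y hx hy]
          have := hL x' h'.2.2 hne
          omega
        · omega
        · omega
        · omega
        · rw [hrk4a x' y (by omega) (by omega), hrk1 x y hx hy]
          have hx'val : x' = A + p - 1 := h'.1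
          omega
      · right
        intro y' hG' hne
        rcases hclass x y' hG' with h' | h' | h' | h' | h'
        · rw [hrk1 x y' h'.1 h'.2.1, hrk1 x y hx hy]
          have := hR y' h'.2.2 hne
          omega
        · rw [hrk2 x y' (by omega) (by omega), hrk1 x y hx hy]
          omega
        · omega
        · omega
        · omega
    · -- root1
      obtain ⟨hxr, hyB⟩ := hreg
      left
      intro x' hG' hne
      rcases hclass x' y hG' with h' | h' | h' | h' | h'
      · omega
      · exact absurd (h'.1.trans hxr.symm) hne
      · rw [hrk3 x' y h'.1 h'.2.1, hrk2 x y (by omega) (by omega)]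
        omega
      · omega
      · omega
    · -- P1 cell
      obtain ⟨hAx, hx2, hBy, hy2, hN1⟩ := hreg
      by_cases hj0 : y = B
      · right
        intro y' hG' hne
        rcases hclass x y' hG' with h' | h' | h' | h' | h'
        · omega
        · omega
        · rw [hrk3 x y' h'.1 h'.2.1, hrk3 x y hAx hx2]
          omega
        · omega
        · omega
      · rcases D1.peel_bwd hN1 with hbw | hbw
        · right
          intro y' hG' hne
          rcases hclass x y' hG' with h' | h' | h' | h' | h'
          · omega
          · omega
          · rw [hrk3 x y' h'.1 h'.2.1, hrk3 x y hAx hx2]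
            have := hbw (y' - B) h'.2.2.2.2
            omega
          · omega
          · omega
        · left
          intro x' hG' hne
          rcases hclass x' y hG' with h' | h' | h' | h' | h'
          · omega
          · omega
          · rw [hrk3 x' y h'.1 h'.2.1, hrk3 x y hAx hx2]
            have := hbw (x' - A) h'.2.2.2.2
            omega
          · omega
          · have : y = c := h'.2
            omega
    · -- P2 cell
      obtain ⟨hAx, hx2, hBy, hy2, hN2⟩ := hreg
      by_cases hlastrow : x = A + p - 1
      · left
        intro x' hG' hne
        rcases hclass x' y hG' with h' | h' | h' | h' | h'
        · omega
        · omega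
        · omega
        · rw [hrk4b x' y h'.1 (by omega), hrk4b x y hAx (by omega)]
          omega
        · have : y = c := h'.2
          omega
      · rcases D2.peel_fwd hN2 with hfw | hfw
        · right
          intro y' hG' hne
          rcases hclass x y' hG' with h' | h' | h' | h' | h'
          · omega
          · omega
          · omega
          · rw [hrk4b x y' hAx (by omega), hrk4b x y hAx (by omega)]
            have := hfw (y' - (B + b1)) h'.2.2.2.2
            omega
          · omega
        · left
          intro x' hG' hne
          rcases hclass x' y hG' with h' | h' | h' | h' | h'
          · omega
          · omega
          · omega
          · rw [hrk4b x' y h'.1 (by omega), hrk4b x y hAx (by omega)]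
            have := hfw (x' - (A + a1)) h'.2.2.2.2
            omega
          · have : y = c := h'.2
            omega
    · -- root2
      obtain ⟨hx2, hyc⟩ := hreg
      right
      intro y' hG' hne
      rcases hclass x y' hG' with h' | h' | h' | h' | h'
      · omega
      · omega
      · omega
      · rw [hrk4b x y' (by omega) (by omega), hrk4a x y (by omega) (by omega)]
        omega
      · exact absurd (h'.2.trans hyc.symm) hne
  -- heavy cell in the new solution
  have hheavy1 : D1.a + D1.b - 1 < D1.R D1.a := by
    rw [hD1a, hD1b]
    show _ < q * min a1 a1
    rw [min_self]
    have h1 : 2 * a1 ≤ q * a1 := Nat.mul_le_mul_right a1 hq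
    have h2 : 2 * b1 ≤ p * b1 := Nat.mul_le_mul_right b1 hp
    omega
  obtain ⟨i0, j0, hij⟩ := D1.heavy hheavy1
  have hb0 : i0 < a1 ∧ j0 < b1 := by
    have := D1.supp_lt (show D1.N i0 j0 ≠ 0 by omega)
    rwa [hD1a, hD1b] at this
  refine ⟨⟨G, fun i j hi => hrow_bound i j hi, fun i j hj => hcol_bound i j hj,
    hrows, hcols, RK, hpeel, hscard⟩, i0 + A, j0 + B, ?_⟩
  show 2 ≤ G (i0 + A) (j0 + B)
  rw [hchar_P1 (i0 + A) (j0 + B) (by omega) (by omega), if_pos (by omega : B ≤ j0 + B),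
      show i0 + A - A = i0 from by omega, show j0 + B - B = j0 from by omega]
  exact hij


lemma add_block {p q : ℕ} (hp : 2 ≤ p) (hq : 2 ≤ q) (hco : Nat.Coprime p q)
    {A B s : ℕ} (hsAB : s ≤ A + B) (S : Sol p q A B s) :
    Nonempty (Sol p q (A + p) (B + q) (s + 1)) := by
  set D0 := baseStair p q hp hq hco with hD0def
  have hD0a : D0.a = p := rfl
  have hD0b : D0.b = q := rfl
  have hR0diff : ∀ i, i < p → D0.R (i+1) - D0.R i = q := by
    intro i hi
    show q * min (i+1) p - q * min i p = q
    rw [Nat.min_eq_left (by omega), Nat.min_eq_left (by omega), Nat.mul_succ]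
    omega
  have hC0diff : ∀ j, j < q → D0.C (j+1) - D0.C j = p := by
    intro j hj
    show p * min (j+1) q - p * min j q = p
    rw [Nat.min_eq_left (by omega), Nat.min_eq_left (by omega), Nat.mul_succ]
    omega
  set G : ℕ → ℕ → ℕ := fun x y =>
    S.F x y + (if A ≤ x ∧ B ≤ y then D0.N (x - A) (y - B) else 0) with hGdef
  have hGapp : ∀ x y, G x y
      = S.F x y + (if A ≤ x ∧ B ≤ y then D0.N (x - A) (y - B) else 0) := fun _ _ => rfl
  have hclass : ∀ x y, G x y ≠ 0 →
      (x < A ∧ y < B ∧ S.F x y ≠ 0) ∨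
      (A ≤ x ∧ x < A + p ∧ B ≤ y ∧ y < B + q ∧ D0.N (x - A) (y - B) ≠ 0) := by
    intro x y h
    rw [hGapp] at h
    rcases Nat.lt_or_ge x A with hx | hx
    · left
      refine ⟨hx, ?_, ?_⟩
      · rcases Nat.lt_or_ge y B with hy | hy
        · exact hy
        · exfalso
          rw [S.col_bound x y hy, if_neg (by omega : ¬(A ≤ x ∧ B ≤ y))] at h
          omega
      · intro h0
        rw [h0, if_neg (by omega : ¬(A ≤ x ∧ B ≤ y))] at h
        omega
    · right
      rw [S.row_bound x y (by omega)] at h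
      rcases Nat.lt_or_ge y B with hy | hy
      · exfalso
        rw [if_neg (by omega : ¬(A ≤ x ∧ B ≤ y))] at h
        omega
      · rw [if_pos ⟨hx, hy⟩] at h
        have hlt := D0.supp_lt (by omega : D0.N (x - A) (y - B) ≠ 0)
        rw [hD0a, hD0b] at hlt
        refine ⟨hx, by omega, hy, by omega, by omega⟩
  have hrow_bound : ∀ x y, A + p ≤ x → G x y = 0 := by
    intro x y hx
    rw [hGapp, S.row_bound x y (by omega)]
    by_cases h : A ≤ x ∧ B ≤ y
    · rw [if_pos h, D0.row_zero (show D0.a ≤ x - A by rw [hD0a]; omega)]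
    · rw [if_neg h]
  have hcol_bound : ∀ x y, B + q ≤ y → G x y = 0 := by
    intro x y hy
    rw [hGapp, S.col_bound x y (by omega)]
    by_cases h : A ≤ x ∧ B ≤ y
    · rw [if_pos h, D0.col_zero (show D0.b ≤ y - B by rw [hD0b]; omega)]
    · rw [if_neg h]
  have hrows : ∀ x, x < A + p → ∑ y ∈ Finset.range (B + q), G x y = q := by
    intro x hx
    have hsplit : ∑ y ∈ Finset.range (B + q), G x y =
        (∑ y ∈ Finset.range (B + q), S.F x y)
        + (∑ y ∈ Finset.range (B + q), (if A ≤ x ∧ B ≤ y then D0.N (x - A) (y - B) else 0)) := by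
      rw [← Finset.sum_add_distrib]
    rw [hsplit]
    rcases Nat.lt_or_ge x A with hxA | hxA
    · have h2 : (∑ y ∈ Finset.range (B + q),
          (if A ≤ x ∧ B ≤ y then D0.N (x - A) (y - B) else 0)) = 0 :=
        Finset.sum_eq_zero (fun y _ => if_neg (by omega))
      have h1 : ∑ y ∈ Finset.range (B + q), S.F x y = q := by
        rw [sum_pad (S.F x) (show B ≤ B + q by omega) (fun j hj => S.col_bound x j hj)]
        exact S.rows x hxA
      rw [h1, h2]
      omega
    · have h1 : ∑ y ∈ Finset.range (B + q), S.F x y = 0 :=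
        Finset.sum_eq_zero (fun y _ => S.row_bound x y (by omega))
      have hcg : ∀ y ∈ Finset.range (B + q),
          (if A ≤ x ∧ B ≤ y then D0.N (x - A) (y - B) else 0)
          = (if B ≤ y then D0.N (x - A) (y - B) else 0) := by
        intro y _
        by_cases hBy : B ≤ y
        · rw [if_pos (⟨hxA, hBy⟩ : A ≤ x ∧ B ≤ y), if_pos hBy]
        · rw [if_neg (fun h => hBy h.2), if_neg hBy]
      have h2 : (∑ y ∈ Finset.range (B + q),
          (if A ≤ x ∧ B ≤ y then D0.N (x - A) (y - B) else 0)) = q := by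
        rw [Finset.sum_congr rfl hcg, sum_shift (D0.N (x - A)) B q,
            D0.row_sum (show x - A < D0.a by rw [hD0a]; omega) (show D0.b ≤ q by rw [hD0b])]
        exact hR0diff (x - A) (by omega)
      rw [h1, h2]
      omega
  have hcols : ∀ y, y < B + q → ∑ x ∈ Finset.range (A + p), G x y = p := by
    intro y hy
    have hsplit : ∑ x ∈ Finset.range (A + p), G x y =
        (∑ x ∈ Finset.range (A + p), S.F x y)
        + (∑ x ∈ Finset.range (A + p), (if A ≤ x ∧ B ≤ y then D0.N (x - A) (y - B) else 0)) := by
      rw [← Finset.sum_add_distrib]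
    rw [hsplit]
    rcases Nat.lt_or_ge y B with hyB | hyB
    · have h2 : (∑ x ∈ Finset.range (A + p),
          (if A ≤ x ∧ B ≤ y then D0.N (x - A) (y - B) else 0)) = 0 :=
        Finset.sum_eq_zero (fun x _ => if_neg (by omega))
      have h1 : ∑ x ∈ Finset.range (A + p), S.F x y = p := by
        rw [sum_pad (fun x => S.F x y) (show A ≤ A + p by omega)
          (fun i hi => S.row_bound i y hi)]
        exact S.cols y hyB
      rw [h1, h2]
      omega
    · have h1 : ∑ x ∈ Finset.range (A + p), S.F x y = 0 :=
        Finset.sum_eq_zero (fun x _ => S.col_bound x y (by omega))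
      have hcg : ∀ x ∈ Finset.range (A + p),
          (if A ≤ x ∧ B ≤ y then D0.N (x - A) (y - B) else 0)
          = (if A ≤ x then D0.N (x - A) (y - B) else 0) := by
        intro x _
        by_cases hAx : A ≤ x
        · rw [if_pos (⟨hAx, hyB⟩ : A ≤ x ∧ B ≤ y), if_pos hAx]
        · rw [if_neg (fun h => hAx h.1), if_neg hAx]
      have h2 : (∑ x ∈ Finset.range (A + p),
          (if A ≤ x ∧ B ≤ y then D0.N (x - A) (y - B) else 0)) = p := by
        rw [Finset.sum_congr rfl hcg, sum_shift (fun x' => D0.N x' (y - B)) A p,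
            D0.col_sum (show y - B < D0.b by rw [hD0b]; omega) (show D0.a ≤ p by rw [hD0a])]
        exact hC0diff (y - B) (by omega)
      rw [h1, h2]
      omega
  set S3 := D0.suppF.image (fun e => (e.1 + A, e.2 + B)) with hS3
  have hS3mem : ∀ e : ℕ × ℕ, e ∈ S3 ↔
      (A ≤ e.1 ∧ e.1 < A + p ∧ B ≤ e.2 ∧ e.2 < B + q ∧ D0.N (e.1 - A) (e.2 - B) ≠ 0) := by
    intro e
    rw [hS3, Finset.mem_image]
    constructor
    · rintro ⟨w, hw, rfl⟩
      rw [D0.mem_suppF] at hw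
      have hlt := D0.supp_lt hw
      rw [hD0a, hD0b] at hlt
      refine ⟨by omega, by omega, by omega, by omega, ?_⟩
      rw [show w.1 + A - A = w.1 from by omega, show w.2 + B - B = w.2 from by omega]
      exact hw
    · rintro ⟨h1, h2, h3, h4, h5⟩
      refine ⟨(e.1 - A, e.2 - B), D0.mem_suppF.2 h5, ?_⟩
      simp only
      rw [Prod.ext_iff]
      exact ⟨by simp only; omega, by simp only; omega⟩
  have hunion : ((Finset.range (A+p)) ×ˢ (Finset.range (B+q))).filter
      (fun e => G e.1 e.2 ≠ 0)
      = (((Finset.range A) ×ˢ (Finset.range B)).filter (fun e => S.F e.1 e.2 ≠ 0)) ∪ S3 := by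
    ext e
    rw [Finset.mem_filter, Finset.mem_product, Finset.mem_range, Finset.mem_range,
        Finset.mem_union, Finset.mem_filter, Finset.mem_product,
        Finset.mem_range, Finset.mem_range]
    constructor
    · rintro ⟨⟨hx, hy⟩, hG⟩
      rcases hclass e.1 e.2 hG with h | h
      · exact Or.inl ⟨⟨h.1, h.2.1⟩, h.2.2⟩
      · exact Or.inr ((hS3mem e).2 h)
    · intro h
      rcases h with ⟨⟨h1, h2⟩, h3⟩ | h
      · refine ⟨⟨by omega, by omega⟩, ?_⟩
        rw [hGapp, if_neg (by omega : ¬(A ≤ e.1 ∧ B ≤ e.2))]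
        omega
      · rw [hS3mem e] at h
        refine ⟨⟨by omega, by omega⟩, ?_⟩
        rw [hGapp, S.row_bound e.1 e.2 (by omega), if_pos (⟨h.1, h.2.2.1⟩ : A ≤ e.1 ∧ B ≤ e.2)]
        have := h.2.2.2.2
        omega
  have hscard : (((Finset.range (A+p)) ×ˢ (Finset.range (B+q))).filter
      (fun e => G e.1 e.2 ≠ 0)).card = (A + p) + (B + q) - (s + 1) := by
    rw [hunion, Finset.card_union_of_disjoint (by
      rw [Finset.disjoint_left]
      intro e he1 he2
      rw [Finset.mem_filter, Finset.mem_product, Finset.mem_range, Finset.mem_range] at he1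
      rw [hS3mem e] at he2
      omega)]
    have h3 : S3.card = p + q - 1 := by
      rw [hS3, Finset.card_image_of_injective _ (fun u v huv => by
        rw [Prod.ext_iff] at huv
        obtain ⟨hh1, hh2⟩ := huv
        simp only at hh1 hh2
        exact Prod.ext (by omega) (by omega))]
      have := D0.suppF_card
      rw [hD0a, hD0b] at this
      exact this
    rw [S.scard, h3]
    omega
  set RK : ℕ × ℕ → ℕ := fun e =>
    if e.1 < A ∧ e.2 < B then (p + q) + S.rk e else (e.1 - A) + (e.2 - B) with hRK
  have hrk1 : ∀ x y, x < A → y < B → RK (x, y) = (p + q) + S.rk (x, y) := by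
    intro x y h1 h2
    show (if x < A ∧ y < B then _ else _) = _
    rw [if_pos ⟨h1, h2⟩]
  have hrk2 : ∀ x y, A ≤ x → RK (x, y) = (x - A) + (y - B) := by
    intro x y h1
    show (if x < A ∧ y < B then _ else _) = _
    rw [if_neg (by omega : ¬(x < A ∧ y < B))]
  have hpeel : ∀ x y, G x y ≠ 0 →
      (∀ x', G x' y ≠ 0 → x' ≠ x → RK (x', y) < RK (x, y)) ∨
      (∀ y', G x y' ≠ 0 → y' ≠ y → RK (x, y') < RK (x, y)) := by
    intro x y hG
    rcases hclass x y hG with hreg | hreg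
    · obtain ⟨hx, hy, hF⟩ := hreg
      rcases S.peel x y hF with hL | hR
      · left
        intro x' hG' hne
        rcases hclass x' y hG' with h' | h'
        · rw [hrk1 x' y h'.1 h'.2.1, hrk1 x y hx hy]
          have := hL x' h'.2.2 hne
          omega
        · omega
      · right
        intro y' hG' hne
        rcases hclass x y' hG' with h' | h'
        · rw [hrk1 x y' h'.1 h'.2.1, hrk1 x y hx hy]
          have := hR y' h'.2.2 hne
          omega
        · omega
    · obtain ⟨hAx, hx2, hBy, hy2, hN⟩ := hreg
      rcases D0.peel_fwd hN with hfw | hfw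
      · right
        intro y' hG' hne
        rcases hclass x y' hG' with h' | h'
        · omega
        · rw [hrk2 x y' hAx, hrk2 x y hAx]
          have := hfw (y' - B) h'.2.2.2.2
          omega
      · left
        intro x' hG' hne
        rcases hclass x' y hG' with h' | h'
        · omega
        · rw [hrk2 x' y h'.1, hrk2 x y hAx]
          have := hfw (x' - A) h'.2.2.2.2
          omega
  exact ⟨⟨G, fun i j hi => hrow_bound i j hi, fun i j hj => hcol_bound i j hj,
    hrows, hcols, RK, hpeel, hscard⟩⟩

lemma conn_all {p q : ℕ} (hp : 2 ≤ p) (hq : 2 ≤ q) (hco : Nat.Coprime p q) :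
    ∀ t, 0 < t → ∃ S : Sol p q (p*t) (q*t) 1, ∃ rr cc, 2 ≤ S.F rr cc := by
  intro t ht
  induction t with
  | zero => omega
  | succ t ih =>
    rcases Nat.eq_zero_or_pos t with rfl | ht'
    · rw [show p * (0+1) = p from by ring, show q * (0+1) = q from by ring]
      set D0 := baseStair p q hp hq hco with hD0def
      have hD0a : D0.a = p := rfl
      have hD0b : D0.b = q := rfl
      have hrowd : ∀ i, i < D0.a → D0.R (i+1) - D0.R i = q := by
        intro i hi
        rw [hD0a] at hi
        show q * min (i+1) p - q * min i p = q
        rw [Nat.min_eq_left (by omega), Nat.min_eq_left (by omega), Nat.mul_succ]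
        omega
      have hcold : ∀ j, j < D0.b → D0.C (j+1) - D0.C j = p := by
        intro j hj
        rw [hD0b] at hj
        show p * min (j+1) q - p * min j q = p
        rw [Nat.min_eq_left (by omega), Nat.min_eq_left (by omega), Nat.mul_succ]
        omega
      have hheavy0 : D0.a + D0.b - 1 < D0.R D0.a := by
        rw [hD0a, hD0b]
        show _ < q * min p p
        rw [min_self]
        have h1 : 2 * p ≤ q * p := Nat.mul_le_mul_right p hq
        have h2 : 2 * q ≤ p * q := Nat.mul_le_mul_right q hp
        have h3 : p * q = q * p := Nat.mul_comm p q
        omega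
      obtain ⟨i0, j0, hij⟩ := D0.heavy hheavy0
      exact ⟨solOfStair p q D0 hrowd hcold, i0, j0, hij⟩
    · obtain ⟨S, rr, cc, hS⟩ := ih ht'
      obtain ⟨S', r', c', hS'⟩ := conn_step hp hq hco S hS
      rw [show p * (t+1) = p * t + p from by ring, show q * (t+1) = q * t + q from by ring]
      exact ⟨S', r', c', hS'⟩

lemma exists_sol {p q : ℕ} (hp : 2 ≤ p) (hq : 2 ≤ q) (hco : Nat.Coprime p q) :
    ∀ u, 0 < u → ∀ s, 0 < s → s ≤ u → Nonempty (Sol p q (p*u) (q*u) s) := by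
  intro u hu
  induction u with
  | zero => omega
  | succ u ih =>
    intro s hs hsu
    by_cases hs1 : s = 1
    · subst hs1
      obtain ⟨S, _, _, _⟩ := conn_all hp hq hco (u+1) (by omega)
      exact ⟨S⟩
    · have hu' : 0 < u := by omega
      obtain ⟨S⟩ := ih hu' (s-1) (by omega) (by omega)
      have hmul : u ≤ p * u := Nat.le_mul_of_pos_left u (show 0 < p by omega)
      obtain ⟨S'⟩ := add_block hp hq hco (show s - 1 ≤ p * u + q * u by omega) S
      rw [show p * (u+1) = p * u + p from by ring, show q * (u+1) = q * u + q from by ring,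
          show s = (s-1) + 1 from by omega]
      exact ⟨S'⟩


end DSA5

namespace DSA5
open Finset

lemma extremal_of_rk {n m : ℕ} (A : Matrix (Fin n) (Fin m) ℝ) (hA : IsDSA n m A)
    (rk : Fin n × Fin m → ℕ)
    (hpeel : ∀ e : Fin n × Fin m, A e.1 e.2 ≠ 0 →
      (∀ f : Fin n × Fin m, A f.1 f.2 ≠ 0 → f.1 = e.1 → f ≠ e → rk f < rk e) ∨
      (∀ f : Fin n × Fin m, A f.1 f.2 ≠ 0 → f.2 = e.2 → f ≠ e → rk f < rk e)) :
    IsExtremal n m A := by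
  refine ⟨hA, ?_⟩
  intro Bm Cm t hB hC ht0 ht1 hsum
  classical
  set Ω := Finset.univ.filter (fun e : Fin n × Fin m => A e.1 e.2 ≠ 0) with hΩ
  have hmem : ∀ e : Fin n × Fin m, e ∈ Ω ↔ A e.1 e.2 ≠ 0 := by
    intro e
    rw [hΩ, Finset.mem_filter]
    simp
  have hApt : ∀ x y, A x y = t * Bm x y + (1 - t) * Cm x y := by
    intro x y
    have := congrFun (congrFun hsum x) y
    simpa [Matrix.add_apply, Matrix.smul_apply, smul_eq_mul] using this
  have hsuppB : ∀ x y, Bm x y ≠ 0 → (x, y) ∈ Ω := by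
    intro x y h
    rw [hmem]
    intro hA0
    have h1 := hApt x y
    rw [hA0] at h1
    have hb := hB.1 x y
    have hc := hC.1 x y
    have hbz : Bm x y = 0 := by nlinarith
    exact h hbz
  have hsuppC : ∀ x y, Cm x y ≠ 0 → (x, y) ∈ Ω := by
    intro x y h
    rw [hmem]
    intro hA0
    have h1 := hApt x y
    rw [hA0] at h1
    have hb := hB.1 x y
    have hc := hC.1 x y
    have hcz : Cm x y = 0 := by nlinarith
    exact h hcz
  have hpeel' : ∀ e ∈ Ω, (∀ f ∈ Ω, f.1 = e.1 → f ≠ e → rk f < rk e) ∨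
      (∀ f ∈ Ω, f.2 = e.2 → f ≠ e → rk f < rk e) := by
    intro e he
    rcases hpeel e ((hmem e).1 he) with h | h
    · exact Or.inl (fun f hf => h f ((hmem f).1 hf))
    · exact Or.inr (fun f hf => h f ((hmem f).1 hf))
  have hBC : Bm = Cm := by
    apply uniq rk Ω hpeel' Bm Cm hsuppB hsuppC
    · intro x
      rw [hB.2.2 x, hC.2.2 x]
    · intro y
      rw [hB.2.1 y, hC.2.1 y]
  left
  funext x y
  have h1 := hApt x y
  rw [← hBC] at h1
  have : A x y = Bm x y := by rw [h1]; ring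
  rw [this]

end DSA5

/-- If neither of `n, m` divides the other, then for every `s` with
`1 ≤ s ≤ gcd(n,m)` there is an extremal `n × m` doubly stochastic array whose
support has size `n + m − s`. -/
theorem exists_extremal_of_support_size (n m : ℕ) (hn : 0 < n) (hm : 0 < m)
    (hnm : ¬ n ∣ m) (hmn : ¬ m ∣ n) (s : ℕ) (hs1 : 1 ≤ s) (hs2 : s ≤ Nat.gcd n m) :
    ∃ A : Matrix (Fin n) (Fin m) ℝ, IsExtremal n m A ∧
      suppCard n m A = n + m - s := by
  classical
  set g := Nat.gcd n m with hg
  have hg0 : 0 < g := Nat.gcd_pos_of_pos_left m hn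
  set p := n / g with hpdef
  set q := m / g with hqdef
  have hpg : p * g = n := Nat.div_mul_cancel (Nat.gcd_dvd_left n m)
  have hqg : q * g = m := Nat.div_mul_cancel (Nat.gcd_dvd_right n m)
  have hco : Nat.Coprime p q := Nat.coprime_div_gcd_div_gcd hg0
  have hp2 : 2 ≤ p := by
    by_contra hc
    push_neg at hc
    interval_cases p
    · omega
    · have : g = n := by omega
      exact hnm (this ▸ Nat.gcd_dvd_right n m)
  have hq2 : 2 ≤ q := by
    by_contra hc
    push_neg at hc
    interval_cases q
    · omega
    · have : g = m := by omega
      exact hmn (this ▸ Nat.gcd_dvd_left n m)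
  have hex : Nonempty (DSA5.Sol p q n m s) := by
    rw [← hpg, ← hqg]
    exact DSA5.exists_sol hp2 hq2 hco g hg0 s hs1 hs2
  obtain ⟨S⟩ := hex
  set A : Matrix (Fin n) (Fin m) ℝ := fun i j => (g : ℝ) * (S.F i.val j.val : ℝ) with hAdef
  have hAne : ∀ (i : Fin n) (j : Fin m), A i j ≠ 0 ↔ S.F i.val j.val ≠ 0 := by
    intro i j
    rw [hAdef]
    simp only
    constructor
    · intro h h0
      rw [h0] at h
      simp at h
    · intro h h0
      rcases mul_eq_zero.1 h0 with h1 | h1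
      · have : (g : ℝ) ≠ 0 := Nat.cast_ne_zero.2 (by omega)
        exact this h1
      · exact h (Nat.cast_eq_zero.1 h1)
  have hDSA : IsDSA n m A := by
    refine ⟨?_, ?_, ?_⟩
    · intro i j
      rw [hAdef]
      positivity
    · intro j
      have h1 : ∑ i : Fin n, A i j = (g : ℝ) * ∑ i : Fin n, (S.F i.val j.val : ℝ) := by
        rw [Finset.mul_sum]
      rw [h1, Fin.sum_univ_eq_sum_range (fun i => ((S.F i j.val : ℕ) : ℝ)) n, ← Nat.cast_sum]
      rw [S.cols j.val j.isLt]
      rw [show ((n:ℕ):ℝ) = ((p * g : ℕ) : ℝ) from by rw [hpg]]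
      push_cast
      ring
    · intro i
      have h1 : ∑ j : Fin m, A i j = (g : ℝ) * ∑ j : Fin m, (S.F i.val j.val : ℝ) := by
        rw [Finset.mul_sum]
      rw [h1, Fin.sum_univ_eq_sum_range (fun j => ((S.F i.val j : ℕ) : ℝ)) m, ← Nat.cast_sum]
      rw [S.rows i.val i.isLt]
      rw [show ((m:ℕ):ℝ) = ((q * g : ℕ) : ℝ) from by rw [hqg]]
      push_cast
      ring
  refine ⟨A, ?_, ?_⟩
  · apply DSA5.extremal_of_rk A hDSA (fun e => S.rk (e.1.val, e.2.val))
    intro e he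
    rw [hAne] at he
    rcases S.peel e.1.val e.2.val he with h | h
    · -- same column disjunct
      right
      intro f hf hfe hne
      rw [hAne] at hf
      have hfv : f.2.val = e.2.val := congrArg Fin.val hfe
      have hfe1 : f.1.val ≠ e.1.val := fun hv => hne (Prod.ext (Fin.ext hv) hfe)
      rw [hfv] at hf
      have hlt := h f.1.val hf hfe1
      rw [show (f.1.val, f.2.val) = (f.1.val, e.2.val) from by rw [hfv]]
      exact hlt
    · -- same row disjunct
      left
      intro f hf hfe hne
      rw [hAne] at hf
      have hfv : f.1.val = e.1.val := congrArg Fin.val hfe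
      have hfe2 : f.2.val ≠ e.2.val := fun hv => hne (Prod.ext hfe (Fin.ext hv))
      rw [hfv] at hf
      have hlt := h f.2.val hf hfe2
      rw [show (f.1.val, f.2.val) = (e.1.val, f.2.val) from by rw [hfv]]
      exact hlt
  · -- support cardinality
    have hset : matSupp n m A
        = ↑(Finset.univ.filter (fun e : Fin n × Fin m => A e.1 e.2 ≠ 0)) := by
      ext e
      simp [matSupp]
    rw [suppCard, hset, Set.ncard_coe_finset]
    rw [show n + m - s = ((Finset.range n ×ˢ Finset.range m).filter
        (fun e => S.F e.1 e.2 ≠ 0)).card from (S.scard).symm]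
    apply Finset.card_bij (fun e _ => (e.1.val, e.2.val))
    · intro e he
      rw [Finset.mem_filter] at he ⊢
      rw [Finset.mem_product, Finset.mem_range, Finset.mem_range]
      exact ⟨⟨e.1.isLt, e.2.isLt⟩, (hAne e.1 e.2).1 he.2⟩
    · intro e1 h1 e2 h2 heq
      rw [Prod.ext_iff] at heq
      obtain ⟨ha, hb⟩ := heq
      simp only at ha hb
      exact Prod.ext (Fin.ext ha) (Fin.ext hb)
    · intro b hb
      rw [Finset.mem_filter, Finset.mem_product, Finset.mem_range, Finset.mem_range] at hb
      obtain ⟨⟨hb1, hb2⟩, hb3⟩ := hb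
      refine ⟨(⟨b.1, hb1⟩, ⟨b.2, hb2⟩), ?_, rfl⟩
      rw [Finset.mem_filter]
      exact ⟨Finset.mem_univ _, (hAne _ _).2 hb3⟩
end

section
/- Let n = d·p and m = d·(p+1), where d > 1 and p > 1 are integers. Then for every integer s with 1 ≤ s ≤ d − 1, there exists an extremal n × m doubly stochastic array A whose support is of size n + m − s. -/
namespace ExtremalDSA


/-! Basic encode/decode helpers -/

lemma enc_div (c : ℕ) {b r : ℕ} (hr : r < b) : (c * b + r) / b = c := by
  have hb : 0 < b := by omega
  rw [mul_comm, Nat.mul_add_div hb, Nat.div_eq_of_lt hr, add_zero]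

lemma enc_mod (c : ℕ) {b r : ℕ} (hr : r < b) : (c * b + r) % b = r := by
  rw [mul_comm, Nat.mul_add_mod, Nat.mod_eq_of_lt hr]

lemma encode_lt {a b c r : ℕ} (hc : c < a) (hr : r < b) : c * b + r < a * b := by
  have h1 : c * b + r < (c + 1) * b := by
    have : (c + 1) * b = c * b + b := by ring
    omega
  exact lt_of_lt_of_le h1 (Nat.mul_le_mul_right _ (by omega))

lemma val_eq_of (pp a b : ℕ) (h1 : a / pp = b / pp) (h2 : a % pp = b % pp) : a = b := by
  rw [← Nat.div_add_mod a pp, ← Nat.div_add_mod b pp, h1, h2]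

lemma val_lt_of (pp a b : ℕ) (h1 : a / pp = b / pp) (h2 : a % pp < b % pp) : a < b := by
  rw [← Nat.div_add_mod a pp, ← Nat.div_add_mod b pp, h1]
  exact Nat.add_lt_add_left h2 _

lemma val_lt_of' (pp a b : ℕ) (h1 : a / pp < b / pp) : a < b := by
  by_contra h
  exact absurd (Nat.div_le_div_right (le_of_not_gt h)) (not_le.2 h1)

lemma fin_eq {N : ℕ} (pp : ℕ) (a b : Fin N) (h1 : (a:ℕ)/pp = (b:ℕ)/pp)
    (h2 : (a:ℕ)%pp = (b:ℕ)%pp) : a = b :=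
  Fin.ext (val_eq_of pp _ _ h1 h2)

/-! Sum helpers -/

lemma sum_decode {M : Type*} [AddCommMonoid M] (a b : ℕ) (hb : 0 < b) (g : ℕ → ℕ → M) :
    ∑ j ∈ Finset.range (a*b), g (j/b) (j%b) =
      ∑ x ∈ Finset.range a ×ˢ Finset.range b, g x.1 x.2 := by
  have key : ∀ x : ℕ × ℕ, x.2 < b → (b * x.1 + x.2) / b = x.1 ∧ (b * x.1 + x.2) % b = x.2 := by
    intro x hx
    constructor
    · rw [Nat.mul_add_div hb, Nat.div_eq_of_lt hx]; ring
    · rw [Nat.mul_add_mod, Nat.mod_eq_of_lt hx]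
  refine Finset.sum_nbij' (fun j => (j/b, j%b)) (fun x => b * x.1 + x.2) ?_ ?_ ?_ ?_ ?_
  · intro j hj
    simp only [Finset.mem_range, Finset.mem_product] at *
    refine ⟨Nat.div_lt_of_lt_mul (by rw [mul_comm]; omega), Nat.mod_lt _ hb⟩
  · intro x hx
    simp only [Finset.mem_range, Finset.mem_product] at *
    calc b * x.1 + x.2 < b * x.1 + b := by omega
    _ = (x.1 + 1) * b := by ring
    _ ≤ a * b := Nat.mul_le_mul_right _ (by omega)
  · intro j hj
    have := Nat.div_add_mod j b
    simp only []
    omega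
  · intro x hx
    simp only [Finset.mem_range, Finset.mem_product] at hx
    have := key x hx.2
    exact Prod.ext this.1 this.2
  · intro j hj; rfl

lemma sum_ind1 {α : Type*} [DecidableEq α] (s : Finset α) (a1 : α) (v1 : ℕ)
    (h1 : a1 ∈ s) :
    ∑ x ∈ s, (if x = a1 then v1 else 0) = v1 := by
  rw [Finset.sum_ite_eq' s a1, if_pos h1]

lemma sum_ind2 {α : Type*} [DecidableEq α] (s : Finset α) (a1 a2 : α) (v1 v2 : ℕ)
    (h1 : a1 ∈ s) (h2 : a2 ∈ s) :
    ∑ x ∈ s, ((if x = a1 then v1 else 0) + (if x = a2 then v2 else 0)) = v1 + v2 := by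
  rw [Finset.sum_add_distrib, Finset.sum_ite_eq' s a1, Finset.sum_ite_eq' s a2,
    if_pos h1, if_pos h2]

lemma sum_ind3 {α : Type*} [DecidableEq α] (s : Finset α) (a1 a2 a3 : α) (v1 v2 v3 : ℕ)
    (h1 : a1 ∈ s) (h2 : a2 ∈ s) (h3 : a3 ∈ s) :
    ∑ x ∈ s, ((if x = a1 then v1 else 0) + (if x = a2 then v2 else 0)
      + (if x = a3 then v3 else 0)) = v1 + v2 + v3 := by
  rw [Finset.sum_add_distrib, Finset.sum_add_distrib, Finset.sum_ite_eq' s a1,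
    Finset.sum_ite_eq' s a2, Finset.sum_ite_eq' s a3, if_pos h1, if_pos h2, if_pos h3]

lemma mem_pr {a b x y : ℕ} (hx : x < a) (hy : y < b) :
    (x, y) ∈ Finset.range a ×ˢ Finset.range b := by
  simp [Finset.mem_product, hx, hy]

/-! The combinatorial core: f1 -/

def f1 (p q c r c' r' : ℕ) : ℕ :=
  if r = 0 ∧ 1 ≤ c ∧ c ≤ q then
    if c' = c ∧ r' = 0 then p
    else if c' + 1 = c ∧ r' = p then 1
    else 0
  else if r = p - 1 ∧ c < q then
    if c' = c ∧ r' = p - 1 then 1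
    else if c' = c ∧ r' = p then p - 1
    else if c' = c + 1 ∧ r' = 1 then 1
    else 0
  else
    if c' = c ∧ r' = r then p - r
    else if c' = c ∧ r' = r + 1 then r + 1
    else 0

lemma f1_ne (p q : ℕ) (hp : 1 < p) {c r c' r' : ℕ} (hr : r < p)
    (h : f1 p q c r c' r' ≠ 0) :
    (c' = c ∧ r' = r) ∨
    (c' = c ∧ r' = r + 1 ∧ ¬(r = 0 ∧ 1 ≤ c ∧ c ≤ q)) ∨
    (c' + 1 = c ∧ r' = p ∧ r = 0 ∧ 1 ≤ c ∧ c ≤ q) ∨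
    (c' = c + 1 ∧ r' = 1 ∧ r = p - 1 ∧ c < q) := by
  unfold f1 at h; split_ifs at h <;> omega

lemma f1_rowsum (d p q : ℕ) (hp : 1 < p) (hqd : q ≤ d - 1) (hd : 1 < d)
    {c r : ℕ} (hc : c < d) (hr : r < p) :
    ∑ x ∈ Finset.range d ×ˢ Finset.range (p+1), f1 p q c r x.1 x.2 = p + 1 := by
  by_cases h1 : r = 0 ∧ 1 ≤ c ∧ c ≤ q
  · have e : ∑ x ∈ Finset.range d ×ˢ Finset.range (p+1), f1 p q c r x.1 x.2 =
        ∑ x ∈ Finset.range d ×ˢ Finset.range (p+1),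
          ((if x = (c, 0) then p else 0) + (if x = (c - 1, p) then 1 else 0)) := by
      refine Finset.sum_congr rfl ?_
      intro x hx
      obtain ⟨cc, rr⟩ := x
      simp only [Finset.mem_product, Finset.mem_range, Prod.mk.injEq] at hx ⊢
      unfold f1
      split_ifs <;> omega
    rw [e, sum_ind2 _ _ _ _ _ (mem_pr hc (by omega)) (mem_pr (by omega) (by omega))]
  · by_cases h2 : r = p - 1 ∧ c < q
    · have e : ∑ x ∈ Finset.range d ×ˢ Finset.range (p+1), f1 p q c r x.1 x.2 =
          ∑ x ∈ Finset.range d ×ˢ Finset.range (p+1),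
            ((if x = (c, p-1) then 1 else 0) + (if x = (c, p) then p - 1 else 0)
              + (if x = (c+1, 1) then 1 else 0)) := by
        refine Finset.sum_congr rfl ?_
        intro x hx
        obtain ⟨cc, rr⟩ := x
        simp only [Finset.mem_product, Finset.mem_range, Prod.mk.injEq] at hx ⊢
        unfold f1
        split_ifs <;> omega
      rw [e, sum_ind3 _ _ _ _ _ _ _ (mem_pr hc (by omega)) (mem_pr hc (by omega))
        (mem_pr (by omega) (by omega))]
      omega
    · have e : ∑ x ∈ Finset.range d ×ˢ Finset.range (p+1), f1 p q c r x.1 x.2 =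
          ∑ x ∈ Finset.range d ×ˢ Finset.range (p+1),
            ((if x = (c, r) then p - r else 0) + (if x = (c, r+1) then r + 1 else 0)) := by
        refine Finset.sum_congr rfl ?_
        intro x hx
        obtain ⟨cc, rr⟩ := x
        simp only [Finset.mem_product, Finset.mem_range, Prod.mk.injEq] at hx ⊢
        unfold f1
        split_ifs <;> omega
      rw [e, sum_ind2 _ _ _ _ _ (mem_pr hc (by omega)) (mem_pr hc (by omega))]
      omega

lemma f1_colsum (d p q : ℕ) (hp : 1 < p) (hqd : q ≤ d - 1) (hd : 1 < d)
    {c' r' : ℕ} (hc' : c' < d) (hr' : r' < p + 1) :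
    ∑ x ∈ Finset.range d ×ˢ Finset.range p, f1 p q x.1 x.2 c' r' = p := by
  by_cases h0 : r' = 0
  · have e : ∑ x ∈ Finset.range d ×ˢ Finset.range p, f1 p q x.1 x.2 c' r' =
        ∑ x ∈ Finset.range d ×ˢ Finset.range p, (if x = (c', 0) then p else 0) := by
      refine Finset.sum_congr rfl ?_
      intro x hx
      obtain ⟨cc, rr⟩ := x
      simp only [Finset.mem_product, Finset.mem_range, Prod.mk.injEq] at hx ⊢
      unfold f1; split_ifs <;> omega
    rw [e, sum_ind1 _ _ _ (mem_pr hc' (by omega))]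
  · by_cases h1 : r' = 1
    · by_cases hcq : 1 ≤ c' ∧ c' ≤ q
      · have e : ∑ x ∈ Finset.range d ×ˢ Finset.range p, f1 p q x.1 x.2 c' r' =
            ∑ x ∈ Finset.range d ×ˢ Finset.range p,
              ((if x = (c', 1) then p - 1 else 0) + (if x = (c' - 1, p - 1) then 1 else 0)) := by
          refine Finset.sum_congr rfl ?_
          intro x hx
          obtain ⟨cc, rr⟩ := x
          simp only [Finset.mem_product, Finset.mem_range, Prod.mk.injEq] at hx ⊢
          unfold f1; split_ifs <;> omega
        rw [e, sum_ind2 _ _ _ _ _ (mem_pr hc' (by omega)) (mem_pr (by omega) (by omega))]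
        omega
      · have e : ∑ x ∈ Finset.range d ×ˢ Finset.range p, f1 p q x.1 x.2 c' r' =
            ∑ x ∈ Finset.range d ×ˢ Finset.range p,
              ((if x = (c', 1) then p - 1 else 0) + (if x = (c', 0) then 1 else 0)) := by
          refine Finset.sum_congr rfl ?_
          intro x hx
          obtain ⟨cc, rr⟩ := x
          simp only [Finset.mem_product, Finset.mem_range, Prod.mk.injEq] at hx ⊢
          unfold f1; split_ifs <;> omega
        rw [e, sum_ind2 _ _ _ _ _ (mem_pr hc' (by omega)) (mem_pr hc' (by omega))]
        omega
    · by_cases h2 : r' ≤ p - 1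
      · have e : ∑ x ∈ Finset.range d ×ˢ Finset.range p, f1 p q x.1 x.2 c' r' =
            ∑ x ∈ Finset.range d ×ˢ Finset.range p,
              ((if x = (c', r' - 1) then r' else 0) + (if x = (c', r') then p - r' else 0)) := by
          refine Finset.sum_congr rfl ?_
          intro x hx
          obtain ⟨cc, rr⟩ := x
          simp only [Finset.mem_product, Finset.mem_range, Prod.mk.injEq] at hx ⊢
          unfold f1; split_ifs <;> omega
        rw [e, sum_ind2 _ _ _ _ _ (mem_pr hc' (by omega)) (mem_pr hc' (by omega))]
        omega
      · have hrp : r' = p := by omega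
        by_cases hcq : c' < q
        · have e : ∑ x ∈ Finset.range d ×ˢ Finset.range p, f1 p q x.1 x.2 c' r' =
              ∑ x ∈ Finset.range d ×ˢ Finset.range p,
                ((if x = (c', p - 1) then p - 1 else 0) + (if x = (c' + 1, 0) then 1 else 0)) := by
            refine Finset.sum_congr rfl ?_
            intro x hx
            obtain ⟨cc, rr⟩ := x
            simp only [Finset.mem_product, Finset.mem_range, Prod.mk.injEq] at hx ⊢
            unfold f1; split_ifs <;> omega
          rw [e, sum_ind2 _ _ _ _ _ (mem_pr hc' (by omega)) (mem_pr (by omega) (by omega))]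
          omega
        · have e : ∑ x ∈ Finset.range d ×ˢ Finset.range p, f1 p q x.1 x.2 c' r' =
              ∑ x ∈ Finset.range d ×ˢ Finset.range p,
                (if x = (c', p - 1) then p else 0) := by
            refine Finset.sum_congr rfl ?_
            intro x hx
            obtain ⟨cc, rr⟩ := x
            simp only [Finset.mem_product, Finset.mem_range, Prod.mk.injEq] at hx ⊢
            unfold f1; split_ifs <;> omega
          rw [e, sum_ind1 _ _ _ (mem_pr hc' (by omega))]

lemma f1_rowcount (d p q : ℕ) (hp : 1 < p) (hqd : q ≤ d - 1) (hd : 1 < d)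
    {c r : ℕ} (hc : c < d) (hr : r < p) :
    ∑ x ∈ Finset.range d ×ˢ Finset.range (p+1),
      (if f1 p q c r x.1 x.2 ≠ 0 then 1 else 0) = if r = p - 1 ∧ c < q then 3 else 2 := by
  by_cases h1 : r = 0 ∧ 1 ≤ c ∧ c ≤ q
  · have e : ∑ x ∈ Finset.range d ×ˢ Finset.range (p+1),
        (if f1 p q c r x.1 x.2 ≠ 0 then 1 else 0) =
        ∑ x ∈ Finset.range d ×ˢ Finset.range (p+1),
          ((if x = (c, 0) then 1 else 0) + (if x = (c - 1, p) then 1 else 0)) := by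
      refine Finset.sum_congr rfl ?_
      intro x hx
      obtain ⟨cc, rr⟩ := x
      simp only [Finset.mem_product, Finset.mem_range, Prod.mk.injEq] at hx ⊢
      unfold f1
      split_ifs <;> omega
    rw [e, sum_ind2 _ _ _ _ _ (mem_pr hc (by omega)) (mem_pr (by omega) (by omega)),
      if_neg (by omega)]
  · by_cases h2 : r = p - 1 ∧ c < q
    · have e : ∑ x ∈ Finset.range d ×ˢ Finset.range (p+1),
          (if f1 p q c r x.1 x.2 ≠ 0 then 1 else 0) =
          ∑ x ∈ Finset.range d ×ˢ Finset.range (p+1),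
            ((if x = (c, p-1) then 1 else 0) + (if x = (c, p) then 1 else 0)
              + (if x = (c+1, 1) then 1 else 0)) := by
        refine Finset.sum_congr rfl ?_
        intro x hx
        obtain ⟨cc, rr⟩ := x
        simp only [Finset.mem_product, Finset.mem_range, Prod.mk.injEq] at hx ⊢
        unfold f1
        split_ifs <;> omega
      rw [e, sum_ind3 _ _ _ _ _ _ _ (mem_pr hc (by omega)) (mem_pr hc (by omega))
        (mem_pr (by omega) (by omega)), if_pos h2]
    · have e : ∑ x ∈ Finset.range d ×ˢ Finset.range (p+1),
          (if f1 p q c r x.1 x.2 ≠ 0 then 1 else 0) =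
          ∑ x ∈ Finset.range d ×ˢ Finset.range (p+1),
            ((if x = (c, r) then 1 else 0) + (if x = (c, r+1) then 1 else 0)) := by
        refine Finset.sum_congr rfl ?_
        intro x hx
        obtain ⟨cc, rr⟩ := x
        simp only [Finset.mem_product, Finset.mem_range, Prod.mk.injEq] at hx ⊢
        unfold f1
        split_ifs <;> omega
      rw [e, sum_ind2 _ _ _ _ _ (mem_pr hc (by omega)) (mem_pr hc (by omega)),
        if_neg h2]


/-! The matrix -/

noncomputable def Amat (d p q : ℕ) : Matrix (Fin (d*p)) (Fin (d*(p+1))) ℝ :=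
  fun i j => (d : ℝ) * (f1 p q ((i:ℕ)/p) ((i:ℕ)%p) ((j:ℕ)/(p+1)) ((j:ℕ)%(p+1)) : ℝ)

lemma Amat_ne_iff (d p q : ℕ) (hd : 1 < d) (i : Fin (d*p)) (j : Fin (d*(p+1))) :
    Amat d p q i j ≠ 0 ↔
      f1 p q ((i:ℕ)/p) ((i:ℕ)%p) ((j:ℕ)/(p+1)) ((j:ℕ)%(p+1)) ≠ 0 := by
  unfold Amat
  constructor
  · intro h hf
    apply h
    rw [hf]
    simp
  · intro hf
    have hd0 : (d : ℝ) ≠ 0 := Nat.cast_ne_zero.2 (by omega)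
    exact mul_ne_zero hd0 (Nat.cast_ne_zero.2 hf)

lemma div_lt_d {d p : ℕ} (hp : 0 < p) (i : Fin (d*p)) : (i:ℕ)/p < d :=
  (Nat.div_lt_iff_lt_mul hp).2 i.isLt

lemma div_lt_d' {d p : ℕ} (j : Fin (d*(p+1))) : (j:ℕ)/(p+1) < d :=
  (Nat.div_lt_iff_lt_mul (by omega)).2 j.isLt

lemma Amat_rowsum (d p q : ℕ) (hd : 1 < d) (hp : 1 < p) (hqd : q ≤ d - 1)
    (i : Fin (d*p)) : ∑ j, Amat d p q i j = ((d*(p+1) : ℕ) : ℝ) := by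
  have hp0 : 0 < p := by omega
  have hn : ∑ j : Fin (d*(p+1)),
      (f1 p q ((i:ℕ)/p) ((i:ℕ)%p) ((j:ℕ)/(p+1)) ((j:ℕ)%(p+1)) : ℕ) = p + 1 := by
    rw [Fin.sum_univ_eq_sum_range
      (fun jv => f1 p q ((i:ℕ)/p) ((i:ℕ)%p) (jv/(p+1)) (jv%(p+1)))]
    rw [sum_decode d (p+1) (by omega)]
    exact f1_rowsum d p q hp hqd hd (div_lt_d hp0 i) (Nat.mod_lt _ hp0)
  unfold Amat
  rw [← Finset.mul_sum]
  have : (∑ j : Fin (d*(p+1)),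
      ((f1 p q ((i:ℕ)/p) ((i:ℕ)%p) ((j:ℕ)/(p+1)) ((j:ℕ)%(p+1)) : ℕ) : ℝ)) = ((p + 1 : ℕ) : ℝ) := by
    rw [← Nat.cast_sum, hn]
  rw [this]
  push_cast
  ring

lemma Amat_colsum (d p q : ℕ) (hd : 1 < d) (hp : 1 < p) (hqd : q ≤ d - 1)
    (j : Fin (d*(p+1))) : ∑ i, Amat d p q i j = ((d*p : ℕ) : ℝ) := by
  have hp0 : 0 < p := by omega
  have hn : ∑ i : Fin (d*p),
      (f1 p q ((i:ℕ)/p) ((i:ℕ)%p) ((j:ℕ)/(p+1)) ((j:ℕ)%(p+1)) : ℕ) = p := by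
    rw [Fin.sum_univ_eq_sum_range
      (fun iv => f1 p q (iv/p) (iv%p) ((j:ℕ)/(p+1)) ((j:ℕ)%(p+1)))]
    rw [sum_decode d p hp0 (fun c r => f1 p q c r ((j:ℕ)/(p+1)) ((j:ℕ)%(p+1)))]
    exact f1_colsum d p q hp hqd hd (div_lt_d' j) (Nat.mod_lt _ (by omega))
  unfold Amat
  rw [← Finset.mul_sum]
  have : (∑ i : Fin (d*p),
      ((f1 p q ((i:ℕ)/p) ((i:ℕ)%p) ((j:ℕ)/(p+1)) ((j:ℕ)%(p+1)) : ℕ) : ℝ)) = ((p : ℕ) : ℝ) := by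
    rw [← Nat.cast_sum, hn]
  rw [this]
  push_cast
  ring



section Ext

variable {d p q : ℕ} (D : Matrix (Fin (d*p)) (Fin (d*(p+1))) ℝ)

lemma col_step (hcol : ∀ j, ∑ i, D i j = 0) (j : Fin (d*(p+1))) (i0 : Fin (d*p))
    (h : ∀ i, i ≠ i0 → D i j = 0) : D i0 j = 0 := by
  have h0 := hcol j
  rwa [Finset.sum_eq_single i0 (fun b _ hb => h b hb) (by simp)] at h0

lemma row_step (hrow : ∀ i, ∑ j, D i j = 0) (i : Fin (d*p)) (j0 : Fin (d*(p+1)))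
    (h : ∀ j, j ≠ j0 → D i j = 0) : D i j0 = 0 := by
  have h0 := hrow i
  rwa [Finset.sum_eq_single j0 (fun b _ hb => h b hb) (by simp)] at h0

lemma R0 (hd : 1 < d) (hp : 1 < p) (hqd : q ≤ d - 1)
    (hrow : ∀ i, ∑ j, D i j = 0) (hcol : ∀ j, ∑ i, D i j = 0)
    (hsupp : ∀ i j, Amat d p q i j = 0 → D i j = 0)
    (i : Fin (d*p)) (hr : (i:ℕ) % p = 0) : ∀ j, D i j = 0 := by
  have hp0 : 0 < p := by omega
  have hcd : (i:ℕ)/p < d := div_lt_d hp0 i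
  -- main column j1 = (c, 0)
  have hbj1 : ((i:ℕ)/p)*(p+1) + 0 < d*(p+1) := encode_lt hcd (by omega)
  set j1 : Fin (d*(p+1)) := ⟨((i:ℕ)/p)*(p+1) + 0, hbj1⟩ with hj1def
  have hd1 : (j1:ℕ)/(p+1) = (i:ℕ)/p := enc_div _ (by omega)
  have hm1 : (j1:ℕ)%(p+1) = 0 := enc_mod _ (by omega)
  have h1 : D i j1 = 0 := by
    apply col_step D hcol
    intro i' hne
    by_cases hA : Amat d p q i' j1 = 0
    · exact hsupp _ _ hA
    exfalso
    apply hne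
    have hf := f1_ne p q hp (Nat.mod_lt (i':ℕ) hp0) ((Amat_ne_iff d p q hd i' j1).1 hA)
    rw [hd1, hm1] at hf
    refine fin_eq p i' i ?_ ?_ <;>
      rcases hf with ⟨ha, hb⟩ | ⟨ha, hb, hc⟩ | ⟨ha, hb, hc⟩ | ⟨ha, hb, hc⟩ <;> omega
  -- second column
  by_cases hc1 : 1 ≤ (i:ℕ)/p ∧ (i:ℕ)/p ≤ q
  · -- type1 row : second entry at (c-1, p)
    have hbj2 : ((i:ℕ)/p - 1)*(p+1) + p < d*(p+1) := encode_lt (by omega) (by omega)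
    set j2 : Fin (d*(p+1)) := ⟨((i:ℕ)/p - 1)*(p+1) + p, hbj2⟩ with hj2def
    have hd2 : (j2:ℕ)/(p+1) = (i:ℕ)/p - 1 := enc_div _ (by omega)
    have hm2 : (j2:ℕ)%(p+1) = p := enc_mod _ (by omega)
    have h2 : D i j2 = 0 := by
      apply row_step D hrow
      intro j' hne
      by_cases hA : Amat d p q i j' = 0
      · exact hsupp _ _ hA
      have hf := f1_ne p q hp (Nat.mod_lt (i:ℕ) hp0) ((Amat_ne_iff d p q hd i j').1 hA)
      rcases hf with ⟨ha, hb⟩ | ⟨ha, hb, hc⟩ | ⟨ha, hb, hc⟩ | ⟨ha, hb, hc⟩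
      · have : j' = j1 := fin_eq (p+1) j' j1 (by omega) (by omega)
        rw [this]; exact h1
      · exact absurd (by exact ⟨hr, hc1.1, hc1.2⟩) hc
      · exact absurd (fin_eq (p+1) j' j2 (by omega) (by omega)) hne
      · omega
    intro j
    by_cases hA : Amat d p q i j = 0
    · exact hsupp _ _ hA
    have hf := f1_ne p q hp (Nat.mod_lt (i:ℕ) hp0) ((Amat_ne_iff d p q hd i j).1 hA)
    rcases hf with ⟨ha, hb⟩ | ⟨ha, hb, hc⟩ | ⟨ha, hb, hc⟩ | ⟨ha, hb, hc⟩
    · rw [fin_eq (p+1) j j1 (by omega) (by omega)]; exact h1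
    · exact absurd (by exact ⟨hr, hc1.1, hc1.2⟩) hc
    · rw [fin_eq (p+1) j j2 (by omega) (by omega)]; exact h2
    · omega
  · -- normal row with r = 0 : second entry at (c, 1)
    have hbj2 : ((i:ℕ)/p)*(p+1) + 1 < d*(p+1) := encode_lt hcd (by omega)
    set j2 : Fin (d*(p+1)) := ⟨((i:ℕ)/p)*(p+1) + 1, hbj2⟩ with hj2def
    have hd2 : (j2:ℕ)/(p+1) = (i:ℕ)/p := enc_div _ (by omega)
    have hm2 : (j2:ℕ)%(p+1) = 1 := enc_mod _ (by omega)
    have h2 : D i j2 = 0 := by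
      apply row_step D hrow
      intro j' hne
      by_cases hA : Amat d p q i j' = 0
      · exact hsupp _ _ hA
      have hf := f1_ne p q hp (Nat.mod_lt (i:ℕ) hp0) ((Amat_ne_iff d p q hd i j').1 hA)
      rcases hf with ⟨ha, hb⟩ | ⟨ha, hb, hc⟩ | ⟨ha, hb, hc⟩ | ⟨ha, hb, hc⟩
      · have : j' = j1 := fin_eq (p+1) j' j1 (by omega) (by omega)
        rw [this]; exact h1
      · exact absurd (fin_eq (p+1) j' j2 (by omega) (by omega)) hne
      · omega
      · omega
    intro j
    by_cases hA : Amat d p q i j = 0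
    · exact hsupp _ _ hA
    have hf := f1_ne p q hp (Nat.mod_lt (i:ℕ) hp0) ((Amat_ne_iff d p q hd i j).1 hA)
    rcases hf with ⟨ha, hb⟩ | ⟨ha, hb, hc⟩ | ⟨ha, hb, hc⟩ | ⟨ha, hb, hc⟩
    · rw [fin_eq (p+1) j j1 (by omega) (by omega)]; exact h1
    · rw [fin_eq (p+1) j j2 (by omega) (by omega)]; exact h2
    · omega
    · omega

end Ext



section Ext2

variable {d p q : ℕ} (D : Matrix (Fin (d*p)) (Fin (d*(p+1))) ℝ)

lemma Dzero (hd : 1 < d) (hp : 1 < p) (hqd : q ≤ d - 1)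
    (hrow : ∀ i, ∑ j, D i j = 0) (hcol : ∀ j, ∑ i, D i j = 0)
    (hsupp : ∀ i j, Amat d p q i j = 0 → D i j = 0) : D = 0 := by
  have hp0 : 0 < p := by omega
  have key : ∀ N, ∀ i : Fin (d*p), (i:ℕ) < N → ∀ j, D i j = 0 := by
    intro N
    induction N with
    | zero => exact fun i h => absurd h (by omega)
    | succ N IH =>
      intro i hiN
      by_cases hlt : (i:ℕ) < N
      · exact IH i hlt
      have IH' : ∀ i' : Fin (d*p), (i':ℕ) < (i:ℕ) → ∀ j, D i' j = 0 :=
        fun i' h => IH i' (by omega)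
      by_cases hr0 : (i:ℕ) % p = 0
      · exact R0 D hd hp hqd hrow hcol hsupp i hr0
      have hrp : (i:ℕ)%p < p := Nat.mod_lt _ hp0
      have hcd : (i:ℕ)/p < d := div_lt_d hp0 i
      -- main column j1 = (c, r)
      have hbj1 : ((i:ℕ)/p)*(p+1) + (i:ℕ)%p < d*(p+1) := encode_lt hcd (by omega)
      set j1 : Fin (d*(p+1)) := ⟨((i:ℕ)/p)*(p+1) + (i:ℕ)%p, hbj1⟩ with hj1def
      have hd1 : (j1:ℕ)/(p+1) = (i:ℕ)/p := enc_div _ (by omega)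
      have hm1 : (j1:ℕ)%(p+1) = (i:ℕ)%p := enc_mod _ (by omega)
      have h1 : D i j1 = 0 := by
        apply col_step D hcol
        intro i' hne
        by_cases hA : Amat d p q i' j1 = 0
        · exact hsupp _ _ hA
        have hf := f1_ne p q hp (Nat.mod_lt (i':ℕ) hp0) ((Amat_ne_iff d p q hd i' j1).1 hA)
        rw [hd1, hm1] at hf
        have hlt' : (i':ℕ) < (i:ℕ) := by
          rcases hf with ⟨ha, hb⟩ | ⟨ha, hb, hc⟩ | ⟨ha, hb, hc⟩ | ⟨ha, hb, hc⟩
          · exact absurd (fin_eq p i' i (by omega) (by omega)) hne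
          · exact val_lt_of p _ _ (by omega) (by omega)
          · omega
          · exact val_lt_of' p _ _ (by omega)
        exact IH' i' hlt' j1
      by_cases ht2 : (i:ℕ)%p = p - 1 ∧ (i:ℕ)/p < q
      · -- type2 row
        have hvi := Nat.div_add_mod (i:ℕ) p
        have hring : ((i:ℕ)/p + 1)*p = p*((i:ℕ)/p) + p := by ring
        have hi1 : (i:ℕ) + 1 < d*p := by
          have hcd2 : (i:ℕ)/p + 1 < d := by omega
          have := encode_lt (a := d) (b := p) (r := 0) hcd2 hp0
          omega
        set i2 : Fin (d*p) := ⟨(i:ℕ)+1, hi1⟩ with hi2def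
        have hi2v : (i2:ℕ) = ((i:ℕ)/p + 1)*p + 0 := by
          simp only [hi2def]
          omega
        have hi2d : (i2:ℕ)/p = (i:ℕ)/p + 1 := by rw [hi2v]; exact enc_div _ hp0
        have hi2m : (i2:ℕ)%p = 0 := by rw [hi2v]; exact enc_mod _ hp0
        have hrow2 : ∀ j, D i2 j = 0 := R0 D hd hp hqd hrow hcol hsupp i2 hi2m
        -- column j2 = (c, p)
        have hbj2 : ((i:ℕ)/p)*(p+1) + p < d*(p+1) := encode_lt hcd (by omega)
        set j2 : Fin (d*(p+1)) := ⟨((i:ℕ)/p)*(p+1) + p, hbj2⟩ with hj2def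
        have hd2 : (j2:ℕ)/(p+1) = (i:ℕ)/p := enc_div _ (by omega)
        have hm2 : (j2:ℕ)%(p+1) = p := enc_mod _ (by omega)
        have h2 : D i j2 = 0 := by
          apply col_step D hcol
          intro i' hne
          by_cases hA : Amat d p q i' j2 = 0
          · exact hsupp _ _ hA
          have hf := f1_ne p q hp (Nat.mod_lt (i':ℕ) hp0) ((Amat_ne_iff d p q hd i' j2).1 hA)
          rw [hd2, hm2] at hf
          rcases hf with ⟨ha, hb⟩ | ⟨ha, hb, hc⟩ | ⟨ha, hb, hc⟩ | ⟨ha, hb, hc⟩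
          · exact absurd hb (by have := Nat.mod_lt (i':ℕ) hp0; omega)
          · exact absurd (fin_eq p i' i (by omega) (by omega)) hne
          · have : i' = i2 := fin_eq p i' i2 (by omega) (by omega)
            rw [this]; exact hrow2 j2
          · omega
        -- column j3 = (c+1, 1)
        have hbj3 : ((i:ℕ)/p + 1)*(p+1) + 1 < d*(p+1) := encode_lt (by omega) (by omega)
        set j3 : Fin (d*(p+1)) := ⟨((i:ℕ)/p + 1)*(p+1) + 1, hbj3⟩ with hj3def
        have hd3 : (j3:ℕ)/(p+1) = (i:ℕ)/p + 1 := enc_div _ (by omega)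
        have hm3 : (j3:ℕ)%(p+1) = 1 := enc_mod _ (by omega)
        have h3 : D i j3 = 0 := by
          apply row_step D hrow
          intro j' hne
          by_cases hA : Amat d p q i j' = 0
          · exact hsupp _ _ hA
          have hf := f1_ne p q hp hrp ((Amat_ne_iff d p q hd i j').1 hA)
          rcases hf with ⟨ha, hb⟩ | ⟨ha, hb, hc⟩ | ⟨ha, hb, hc⟩ | ⟨ha, hb, hc⟩
          · rw [fin_eq (p+1) j' j1 (by omega) (by omega)]; exact h1
          · rw [fin_eq (p+1) j' j2 (by omega) (by omega)]; exact h2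
          · omega
          · exact absurd (fin_eq (p+1) j' j3 (by omega) (by omega)) hne
        intro j
        by_cases hA : Amat d p q i j = 0
        · exact hsupp _ _ hA
        have hf := f1_ne p q hp hrp ((Amat_ne_iff d p q hd i j).1 hA)
        rcases hf with ⟨ha, hb⟩ | ⟨ha, hb, hc⟩ | ⟨ha, hb, hc⟩ | ⟨ha, hb, hc⟩
        · rw [fin_eq (p+1) j j1 (by omega) (by omega)]; exact h1
        · rw [fin_eq (p+1) j j2 (by omega) (by omega)]; exact h2
        · omega
        · rw [fin_eq (p+1) j j3 (by omega) (by omega)]; exact h3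
      · -- generic row (r ≥ 1, not type2)
        have hbj2 : ((i:ℕ)/p)*(p+1) + ((i:ℕ)%p + 1) < d*(p+1) := encode_lt hcd (by omega)
        set j2 : Fin (d*(p+1)) := ⟨((i:ℕ)/p)*(p+1) + ((i:ℕ)%p + 1), hbj2⟩ with hj2def
        have hd2 : (j2:ℕ)/(p+1) = (i:ℕ)/p := enc_div _ (by omega)
        have hm2 : (j2:ℕ)%(p+1) = (i:ℕ)%p + 1 := enc_mod _ (by omega)
        have h2 : D i j2 = 0 := by
          apply row_step D hrow
          intro j' hne
          by_cases hA : Amat d p q i j' = 0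
          · exact hsupp _ _ hA
          have hf := f1_ne p q hp hrp ((Amat_ne_iff d p q hd i j').1 hA)
          rcases hf with ⟨ha, hb⟩ | ⟨ha, hb, hc⟩ | ⟨ha, hb, hc⟩ | ⟨ha, hb, hc⟩
          · rw [fin_eq (p+1) j' j1 (by omega) (by omega)]; exact h1
          · exact absurd (fin_eq (p+1) j' j2 (by omega) (by omega)) hne
          · omega
          · omega
        intro j
        by_cases hA : Amat d p q i j = 0
        · exact hsupp _ _ hA
        have hf := f1_ne p q hp hrp ((Amat_ne_iff d p q hd i j).1 hA)
        rcases hf with ⟨ha, hb⟩ | ⟨ha, hb, hc⟩ | ⟨ha, hb, hc⟩ | ⟨ha, hb, hc⟩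
        · rw [fin_eq (p+1) j j1 (by omega) (by omega)]; exact h1
        · rw [fin_eq (p+1) j j2 (by omega) (by omega)]; exact h2
        · omega
        · omega
  ext i j
  rw [Matrix.zero_apply]
  exact key ((i:ℕ)+1) i (by omega) j

end Ext2




lemma Amat_isDSA (d p q : ℕ) (hd : 1 < d) (hp : 1 < p) (hqd : q ≤ d - 1) :
    IsDSA (d*p) (d*(p+1)) (Amat d p q) := by
  refine ⟨fun i j => ?_, fun j => ?_, fun i => ?_⟩
  · unfold Amat
    positivity
  · rw [Amat_colsum d p q hd hp hqd j]
  · rw [Amat_rowsum d p q hd hp hqd i]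

lemma Amat_extremal (d p q : ℕ) (hd : 1 < d) (hp : 1 < p) (hqd : q ≤ d - 1) :
    IsExtremal (d*p) (d*(p+1)) (Amat d p q) := by
  refine ⟨Amat_isDSA d p q hd hp hqd, ?_⟩
  intro B C t hB hC ht0 ht1 hA
  left
  have hBC : B - C = 0 := by
    apply Dzero (B - C) hd hp hqd
    · intro i
      simp only [Matrix.sub_apply, Finset.sum_sub_distrib, hB.2.2 i, hC.2.2 i, sub_self]
    · intro j
      simp only [Matrix.sub_apply, Finset.sum_sub_distrib, hB.2.1 j, hC.2.1 j, sub_self]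
    · intro i j hA0
      have h0 : t * B i j + (1-t) * C i j = 0 := by
        have h := congrFun (congrFun hA i) j
        simp only [Matrix.add_apply, Matrix.smul_apply, smul_eq_mul] at h
        rw [hA0] at h
        exact h.symm
      have hb := hB.1 i j
      have hc := hC.1 i j
      have hBz : B i j = 0 := by nlinarith
      have hCz : C i j = 0 := by nlinarith
      simp [Matrix.sub_apply, hBz, hCz]
  have hBeqC : B = C := sub_eq_zero.1 hBC
  rw [hBeqC]
  ext i j
  have h := congrFun (congrFun hA i) j
  simp only [Matrix.add_apply, Matrix.smul_apply, smul_eq_mul, hBeqC] at h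
  rw [h]
  ring

lemma Amat_suppCard (d p q : ℕ) (hd : 1 < d) (hp : 1 < p) (hqd : q ≤ d - 1) :
    suppCard (d*p) (d*(p+1)) (Amat d p q) = 2*(d*p) + q := by
  classical
  have hp0 : 0 < p := by omega
  have h1 : matSupp (d*p) (d*(p+1)) (Amat d p q) =
      ↑(Finset.univ.filter fun x : Fin (d*p) × Fin (d*(p+1)) => Amat d p q x.1 x.2 ≠ 0) := by
    ext x
    simp [matSupp]
  rw [suppCard, h1, Set.ncard_coe_finset, Finset.card_filter]
  rw [Fintype.sum_prod_type]
  have hrowc : ∀ i : Fin (d*p), (∑ j : Fin (d*(p+1)),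
      if Amat d p q i j ≠ 0 then 1 else 0) =
      if (i:ℕ)%p = p - 1 ∧ (i:ℕ)/p < q then 3 else 2 := by
    intro i
    have e : ∀ j : Fin (d*(p+1)), (if Amat d p q i j ≠ 0 then (1:ℕ) else 0) =
        (if f1 p q ((i:ℕ)/p) ((i:ℕ)%p) ((j:ℕ)/(p+1)) ((j:ℕ)%(p+1)) ≠ 0 then 1 else 0) := by
      intro j
      simp only [Amat_ne_iff d p q hd i j]
    rw [Finset.sum_congr rfl (fun j _ => e j)]
    rw [Fin.sum_univ_eq_sum_range
      (fun jv => if f1 p q ((i:ℕ)/p) ((i:ℕ)%p) (jv/(p+1)) (jv%(p+1)) ≠ 0 then (1:ℕ) else 0)]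
    rw [sum_decode d (p+1) (by omega)
      (fun c' r' => if f1 p q ((i:ℕ)/p) ((i:ℕ)%p) c' r' ≠ 0 then (1:ℕ) else 0)]
    exact f1_rowcount d p q hp hqd hd (div_lt_d hp0 i) (Nat.mod_lt _ hp0)
  rw [Finset.sum_congr rfl (fun i _ => hrowc i)]
  rw [Fin.sum_univ_eq_sum_range (fun iv => if iv%p = p-1 ∧ iv/p < q then (3:ℕ) else 2)]
  rw [sum_decode d p hp0 (fun c r => if r = p-1 ∧ c < q then (3:ℕ) else 2)]
  rw [Finset.sum_product]
  have inner : ∀ c ∈ Finset.range d, (∑ r ∈ Finset.range p,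
      if r = p-1 ∧ c < q then (3:ℕ) else 2) = 2*p + (if c < q then 1 else 0) := by
    intro c _
    have e2 : ∀ r ∈ Finset.range p, (if r = p-1 ∧ c < q then (3:ℕ) else 2) =
        2 + (if r = p - 1 then (if c < q then (1:ℕ) else 0) else 0) := by
      intro r _
      split_ifs <;> omega
    rw [Finset.sum_congr rfl e2, Finset.sum_add_distrib, Finset.sum_const,
      Finset.card_range, Finset.sum_ite_eq' (Finset.range p) (p-1)
        (fun _ => if c < q then (1:ℕ) else 0),
      if_pos (Finset.mem_range.2 (by omega))]
    simp only [smul_eq_mul]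
    split_ifs <;> omega
  rw [Finset.sum_congr rfl inner, Finset.sum_add_distrib, Finset.sum_const, Finset.card_range]
  have hq : (∑ c ∈ Finset.range d, if c < q then (1:ℕ) else 0) = q := by
    have e3 : ∀ c ∈ Finset.range d, (if c < q then (1:ℕ) else 0) =
        if c ∈ Finset.range q then (1:ℕ) else 0 := by
      intro c _
      simp [Finset.mem_range]
    rw [Finset.sum_congr rfl e3, Finset.sum_ite_mem]
    have e4 : Finset.range d ∩ Finset.range q = Finset.range q := by
      ext a
      simp only [Finset.mem_inter, Finset.mem_range]
      omega
    rw [e4]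
    simp
  rw [hq]
  simp only [smul_eq_mul]
  have : d*(2*p) = 2*(d*p) := by ring
  omega


end ExtremalDSA

/-- For `n = d·p`, `m = d·(p+1)` with `d > 1`, `p > 1`, and every
`1 ≤ s ≤ d − 1`, there is an extremal `n × m` doubly stochastic array whose
support has size `n + m − s`. -/
theorem exists_extremal_consecutive_multiples (d p : ℕ) (hd : 1 < d) (hp : 1 < p)
    (s : ℕ) (hs1 : 1 ≤ s) (hs2 : s ≤ d - 1) :
    ∃ A : Matrix (Fin (d * p)) (Fin (d * (p + 1))) ℝ,
      IsExtremal (d * p) (d * (p + 1)) A ∧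
      suppCard (d * p) (d * (p + 1)) A = d * p + d * (p + 1) - s := by
  refine ⟨ExtremalDSA.Amat d p (d - s),
    ExtremalDSA.Amat_extremal d p (d - s) hd hp (by omega), ?_⟩
  rw [ExtremalDSA.Amat_suppCard d p (d - s) hd hp (by omega)]
  have : d*(p+1) = d*p + d := by ring
  omega
end

section
/- Let n and m be coprime positive integers. Then an n × m doubly stochastic array A is extremal if and only if |supp A| = n + m − 1. -/
/-!
Let `Ω` be the support of `A`. The array `A` is extremal iff no nonzero matrix `D` supported on
`Ω` has zero row and column sums: otherwise `A = (A + εD)/2 + (A - εD)/2` for small `ε > 0`.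
Such `D` form the kernel of the vertex–edge incidence matrix `M` of the bipartite graph on
rows ⊔ columns with edge set `Ω`, so `|Ω| = rank M + dim ker M`. The kernel of `Mᵀ` consists of
the `x` with `x i + y j = 0` along the edges. For such `x` the rows `R` with `x i = c` and the
columns `C` with `y j = -c` are closed under edges, so `A` restricted to `R × C` carries all the
mass of these rows and columns: `m |R| = n |C|`. Coprimality then forces `R` and `C` to be
everything, so `ker Mᵀ` is spanned by `(1, -1)`, `rank M = n + m - 1`, and `A` is extremal iff
`|Ω| = n + m - 1`.
-/

open Finset Matrix Module Filter Topology

section Incidence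

variable {ι κ R : Type*}

def bipartiteIncidence [DecidableEq ι] [DecidableEq κ] [Zero R] [One R] (Ω : Set (ι × κ)) :
    Matrix (ι ⊕ κ) Ω R :=
  of fun v p => Sum.elim (fun i => if p.1.1 = i then 1 else 0)
    (fun j => if p.1.2 = j then 1 else 0) v

open scoped Classical in
noncomputable def extendByZero [Zero R] {Ω : Set (ι × κ)} (f : Ω → R) : Matrix ι κ R :=
  of fun i j => if h : (i, j) ∈ Ω then f ⟨(i, j), h⟩ else 0

def HasZeroMargins [Fintype ι] [Fintype κ] [AddCommMonoid R] (D : Matrix ι κ R) : Prop :=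
  (∀ i, ∑ j, D i j = 0) ∧ ∀ j, ∑ i, D i j = 0

variable {Ω : Set (ι × κ)}

@[simp]
lemma extendByZero_apply_coe [Zero R] (f : Ω → R) (p : Ω) :
    extendByZero f p.1.1 p.1.2 = f p := by
  simp [extendByZero]

lemma extendByZero_apply_of_notMem [Zero R] (f : Ω → R) {i : ι} {j : κ} (h : (i, j) ∉ Ω) :
    extendByZero f i j = 0 := by
  simp [extendByZero, h]

variable [Fintype ι] [Fintype κ]

lemma HasZeroMargins.smul [Semiring R] {D : Matrix ι κ R} (hD : HasZeroMargins D) (c : R) :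
    HasZeroMargins (c • D) := by
  simp [HasZeroMargins, ← mul_sum, hD.1, hD.2]

lemma HasZeroMargins.neg [Ring R] {D : Matrix ι κ R} (hD : HasZeroMargins D) :
    HasZeroMargins (-D) := by
  simp [HasZeroMargins, hD.1, hD.2]

lemma bipartiteIncidence_transpose_mulVec [DecidableEq ι] [DecidableEq κ] [CommSemiring R]
    (x : ι ⊕ κ → R) :
    (bipartiteIncidence Ω)ᵀ *ᵥ x = fun p => x (.inl p.1.1) + x (.inr p.1.2) := by
  ext p
  simp [mulVec, dotProduct, bipartiteIncidence, Fintype.sum_sum_type]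

variable [Fintype Ω]

lemma sum_coe_ite_eq_sum_extendByZero [AddCommMonoid R] (f : Ω → R) (P : ι × κ → Prop)
    [DecidablePred P] :
    ∑ p : Ω, (if P p then f p else 0) = ∑ q, if P q then extendByZero f q.1 q.2 else 0 := by
  calc ∑ p : Ω, (if P p then f p else 0)
      = ∑ p : Ω, if P p then extendByZero f p.1.1 p.1.2 else 0 := by
        simp only [extendByZero_apply_coe]
    _ = ∑ q ∈ Ω.toFinset, if P q then extendByZero f q.1 q.2 else 0 :=
        Finset.sum_set_coe (f := fun q => if P q then extendByZero f q.1 q.2 else 0) Ω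
    _ = _ := sum_subset (subset_univ _) fun q _ hq => by
        rw [extendByZero_apply_of_notMem f (by simpa using hq), ite_self]

lemma bipartiteIncidence_mulVec [DecidableEq ι] [DecidableEq κ] [CommSemiring R] (f : Ω → R) :
    bipartiteIncidence Ω *ᵥ f =
      Sum.elim (fun i => ∑ j, extendByZero f i j) (fun j => ∑ i, extendByZero f i j) := by
  ext (i | j) <;>
    simp only [mulVec, dotProduct, bipartiteIncidence, of_apply, Sum.elim_inl, Sum.elim_inr,
      ite_mul, one_mul, zero_mul]
  · rw [sum_coe_ite_eq_sum_extendByZero f (fun q => q.1 = i), Fintype.sum_prod_type, sum_comm]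
    simp
  · rw [sum_coe_ite_eq_sum_extendByZero f (fun q => q.2 = j), Fintype.sum_prod_type]
    simp

lemma ker_bipartiteIncidence_eq_bot_iff [DecidableEq ι] [DecidableEq κ] [CommSemiring R] :
    LinearMap.ker (bipartiteIncidence Ω : Matrix (ι ⊕ κ) Ω R).mulVecLin = ⊥ ↔
      ∀ D : Matrix ι κ R, (∀ i j, (i, j) ∉ Ω → D i j = 0) → HasZeroMargins D → D = 0 := by
  have margins (f : Ω → R) :
      bipartiteIncidence Ω *ᵥ f = 0 ↔ HasZeroMargins (extendByZero f) := by
    simp [bipartiteIncidence_mulVec, funext_iff, HasZeroMargins]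
  simp only [LinearMap.ker_eq_bot', mulVecLin_apply]
  constructor
  · intro h D hD hmarg
    have hext : extendByZero (fun p : Ω => D p.1.1 p.1.2) = D := by
      ext i j
      by_cases hij : (i, j) ∈ Ω
      · exact extendByZero_apply_coe _ ⟨(i, j), hij⟩
      · rw [extendByZero_apply_of_notMem _ hij, hD i j hij]
    have := h _ ((margins _).2 (hext ▸ hmarg))
    ext i j
    by_cases hij : (i, j) ∈ Ω
    · exact congr_fun this ⟨(i, j), hij⟩
    · exact hD i j hij
  · intro h f hf
    have := h _ (fun i j => extendByZero_apply_of_notMem f) ((margins f).1 hf)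
    ext p
    rw [← extendByZero_apply_coe f p, this, Matrix.zero_apply, Pi.zero_apply]

end Incidence

lemma Matrix.finrank_ker_transpose_add_card {α β K : Type*} [Fintype α] [Fintype β] [Field K]
    (M : Matrix α β K) :
    finrank K (LinearMap.ker Mᵀ.mulVecLin) + Fintype.card β =
      finrank K (LinearMap.ker M.mulVecLin) + Fintype.card α := by
  have h₁ := Mᵀ.mulVecLin.finrank_range_add_finrank_ker
  have h₂ := M.mulVecLin.finrank_range_add_finrank_ker
  have h₃ := M.rank_transpose
  simp only [rank, Module.finrank_fintype_fun_eq_card] at h₁ h₂ h₃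
  omega

lemma exists_pos_mul_abs_le {ι κ : Type*} [Finite ι] [Finite κ] {A D : Matrix ι κ ℝ}
    (hA : ∀ i j, 0 ≤ A i j) (hD : ∀ i j, A i j = 0 → D i j = 0) :
    ∃ ε > 0, ∀ i j, ε * |D i j| ≤ A i j := by
  have h : ∀ᶠ ε in 𝓝[>] (0 : ℝ), ∀ i j, ε * |D i j| ≤ A i j := by
    simp only [eventually_all]
    intro i j
    rcases (hA i j).eq_or_lt with hA0 | hApos
    · simp [hD i j hA0.symm, hA i j]
    · have : Tendsto (fun ε : ℝ => ε * |D i j|) (𝓝[>] 0) (𝓝 0) := by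
        simpa using ((continuous_mul_const |D i j|).tendsto 0).mono_left nhdsWithin_le_nhds
      exact this.eventually (eventually_le_nhds hApos)
  obtain ⟨ε, hε, hpos⟩ := (h.and self_mem_nhdsWithin).exists
  exact ⟨ε, hpos, hε⟩

namespace IsDSA

variable {n m : ℕ} {A B : Matrix (Fin n) (Fin m) ℝ}

lemma add_of_hasZeroMargins {D : Matrix (Fin n) (Fin m) ℝ} (hA : IsDSA n m A)
    (hD : HasZeroMargins D) (hAD : ∀ i j, 0 ≤ A i j + D i j) : IsDSA n m (A + D) :=
  ⟨hAD, fun j => by simp [sum_add_distrib, hA.2.1, hD.2],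
    fun i => by simp [sum_add_distrib, hA.2.2, hD.1]⟩

lemma hasZeroMargins_sub (hB : IsDSA n m B) (hA : IsDSA n m A) : HasZeroMargins (B - A) :=
  ⟨fun i => by simp [sum_sub_distrib, hA.2.2, hB.2.2],
    fun j => by simp [sum_sub_distrib, hA.2.1, hB.2.1]⟩

lemma mul_card_eq_mul_card (hA : IsDSA n m A) {R : Finset (Fin n)} {C : Finset (Fin m)}
    (hRC : ∀ i j, A i j ≠ 0 → (i ∈ R ↔ j ∈ C)) : m * #R = n * #C := by
  have hrow (i) (hi : i ∈ R) : ∑ j ∈ C, A i j = ∑ j, A i j :=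
    sum_subset (subset_univ C) fun j _ hj => not_not.1 fun h => hj ((hRC i j h).1 hi)
  have hcol (j) (hj : j ∈ C) : ∑ i ∈ R, A i j = ∑ i, A i j :=
    sum_subset (subset_univ R) fun i _ hi => not_not.1 fun h => hi ((hRC i j h).2 hj)
  have : (m * #R : ℝ) = n * #C := calc
    (m * #R : ℝ) = ∑ i ∈ R, ∑ j, A i j := by simp [hA.2.2, mul_comm]
    _ = ∑ j ∈ C, ∑ i, A i j := by
      rw [← sum_congr rfl hrow, ← sum_congr rfl hcol]
      exact sum_comm
    _ = n * #C := by simp [hA.2.1, mul_comm]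
  exact_mod_cast this

lemma eq_univ_of_forall_mem_iff_mem (hco : n.Coprime m) (hA : IsDSA n m A)
    {R : Finset (Fin n)} {C : Finset (Fin m)} (hRC : ∀ i j, A i j ≠ 0 → (i ∈ R ↔ j ∈ C))
    (hR : R.Nonempty) : R = univ ∧ C = univ := by
  have key := hA.mul_card_eq_mul_card hRC
  have hRn : #R = n := le_antisymm (by simpa using card_le_univ R)
    (Nat.le_of_dvd hR.card_pos (hco.dvd_of_dvd_mul_left ⟨#C, key⟩))
  have hCm : #C = m :=
    Nat.eq_of_mul_eq_mul_left (hRn ▸ hR.card_pos) (by rw [← key, hRn, mul_comm])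
  exact ⟨eq_univ_of_card R (by simp [hRn]), eq_univ_of_card C (by simp [hCm])⟩

lemma exists_eq_smul_of_add_eq_zero (hn : 0 < n) (hco : n.Coprime m) (hA : IsDSA n m A)
    {x : Fin n ⊕ Fin m → ℝ} (hx : ∀ i j, A i j ≠ 0 → x (.inl i) + x (.inr j) = 0) :
    ∃ c : ℝ, x = c • Sum.elim (1 : Fin n → ℝ) (-1) := by
  set c := x (.inl ⟨0, hn⟩)
  obtain ⟨hR, hC⟩ := hA.eq_univ_of_forall_mem_iff_mem hco
    (R := {i | x (.inl i) = c}) (C := {j | x (.inr j) = -c})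
    (fun i j hij => by
      simp only [mem_filter_univ]
      constructor <;> intro h <;> linarith [hx i j hij])
    ⟨⟨0, hn⟩, by simp [c]⟩
  rw [filter_eq_self] at hR hC
  exact ⟨c, funext fun | .inl i => by simpa using hR i | .inr j => by simpa using hC j⟩

lemma finrank_ker_bipartiteIncidence_transpose (hn : 0 < n) (hco : n.Coprime m)
    (hA : IsDSA n m A) [Fintype (matSupp n m A)] :
    finrank ℝ (LinearMap.ker
      (bipartiteIncidence (matSupp n m A) : Matrix _ _ ℝ)ᵀ.mulVecLin) = 1 := by
  have hker : LinearMap.ker (bipartiteIncidence (matSupp n m A) : Matrix _ _ ℝ)ᵀ.mulVecLin =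
      ℝ ∙ Sum.elim (1 : Fin n → ℝ) (-1) := by
    ext x
    rw [LinearMap.mem_ker, mulVecLin_apply, bipartiteIncidence_transpose_mulVec,
      Submodule.mem_span_singleton]
    constructor
    · intro hx
      obtain ⟨c, rfl⟩ := hA.exists_eq_smul_of_add_eq_zero hn hco fun i j hij =>
        congr_fun hx ⟨(i, j), hij⟩
      exact ⟨c, rfl⟩
    · rintro ⟨c, rfl⟩
      ext p
      simp
  rw [hker, finrank_span_singleton]
  exact fun h => by simpa using congr_fun h (.inl ⟨0, hn⟩)

end IsDSA

lemma isExtremal_iff_forall_hasZeroMargins {n m : ℕ} {A : Matrix (Fin n) (Fin m) ℝ}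
    (hA : IsDSA n m A) :
    IsExtremal n m A ↔
      ∀ D : Matrix (Fin n) (Fin m) ℝ,
        (∀ i j, (i, j) ∉ matSupp n m A → D i j = 0) → HasZeroMargins D → D = 0 := by
  constructor
  · intro hext D hsupp hD
    obtain ⟨ε, hε, hle⟩ := exists_pos_mul_abs_le hA.1 fun i j h => hsupp i j (· h)
    have hB : IsDSA n m (A + ε • D) := hA.add_of_hasZeroMargins (hD.smul ε) fun i j => by
      simp only [Matrix.smul_apply, smul_eq_mul]
      nlinarith [hle i j, neg_abs_le (D i j)]
    have hC : IsDSA n m (A + -(ε • D)) := hA.add_of_hasZeroMargins (hD.smul ε).neg fun i j => by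
      simp only [Matrix.neg_apply, Matrix.smul_apply, smul_eq_mul]
      nlinarith [hle i j, le_abs_self (D i j)]
    have hmid : A = (1 / 2 : ℝ) • (A + ε • D) + (1 - 1 / 2 : ℝ) • (A + -(ε • D)) := by
      ext i j; simp; ring
    rcases hext.2 _ _ _ hB hC (by norm_num) (by norm_num) hmid with h | h
    · exact (smul_eq_zero.1 (add_eq_left.1 h)).resolve_left hε.ne'
    · exact (smul_eq_zero.1 (neg_eq_zero.1 (add_eq_left.1 h))).resolve_left hε.ne'
  · intro h
    refine ⟨hA, fun B C t hB hC ht ht1 hABC =>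
      Or.inl (sub_eq_zero.1 (h _ (fun i j hij => ?_) (hB.hasZeroMargins_sub hA)))⟩
    have hAij : A i j = 0 := not_not.1 hij
    have hsplit : A i j = t * B i j + (1 - t) * C i j := by simpa using congr_fun₂ hABC i j
    have hBij : B i j = 0 := by nlinarith [hB.1 i j, hC.1 i j, mul_nonneg ht.le (hB.1 i j)]
    simp [hAij, hBij]

theorem extremal_iff_support_card_coprime_general (n m : ℕ) (hn : 0 < n)
    (hco : Nat.Coprime n m) (A : Matrix (Fin n) (Fin m) ℝ) (hA : IsDSA n m A) :
    IsExtremal n m A ↔ suppCard n m A = n + m - 1 := by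
  classical
  have hdim := (bipartiteIncidence (matSupp n m A) : Matrix _ _ ℝ).finrank_ker_transpose_add_card
  have hcard : Fintype.card (matSupp n m A) = suppCard n m A := by
    rw [suppCard, ← Nat.card_coe_set_eq, Nat.card_eq_fintype_card]
  rw [hA.finrank_ker_bipartiteIncidence_transpose hn hco, hcard, Fintype.card_sum,
    Fintype.card_fin, Fintype.card_fin] at hdim
  rw [isExtremal_iff_forall_hasZeroMargins hA, ← ker_bipartiteIncidence_eq_bot_iff]
  exact Submodule.finrank_eq_zero.symm.trans (by omega)

/-- For coprime `n, m`, a doubly stochastic array is extremal if and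
only if its support has size `n + m − 1`. -/
theorem extremal_iff_support_card_coprime (n m : ℕ) (hn : 0 < n) (hm : 0 < m)
    (hco : Nat.Coprime n m) (A : Matrix (Fin n) (Fin m) ℝ) (hA : IsDSA n m A) :
    IsExtremal n m A ↔ suppCard n m A = n + m - 1 :=
  extremal_iff_support_card_coprime_general n m hn hco A hA
end
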